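/- arXiv:1911.07313 — 4 statements merged into one kernel-verified Lean document; each statement's English description precedes it below -/
import Mathlib

section
/- The function f is continuous on [0,∞) and admits the representation f(z) = E[W⁺ 1{T = 0}] + ∫₀^z d(ξ) dξ for every z ≥ 0. If moreover P(T = 0) > 0 and W⁺ is almost surely bounded below by some constant w₀ > 0, then f has a strictly positive root ẑ ∈ (0,∞). -/
open MeasureTheory Filter Set Topology

open Classical in
/-- `psi1 l x = P(Poi(x) ≥ l)` for `l ∈ ℕ₀`, and `psi1 ⊤ x = 0`. -/
noncomputable def psi1 (l : WithTop ℕ) (x : ℝ) : ℝ :=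
  ∑' j : ℕ, if l ≤ (j : WithTop ℕ) then Real.exp (-x) * x ^ j / (Nat.factorial j : ℝ) else 0

open Classical in
/-- `phi1 l x = P(Poi(x) = l - 1)` for integer `l ≥ 1`, and `0` for `l ∈ {0, ∞}`. -/
noncomputable def phi1 (l : WithTop ℕ) (x : ℝ) : ℝ :=
  ∑' j : ℕ, if (j : WithTop ℕ) + 1 = l then Real.exp (-x) * x ^ j / (Nat.factorial j : ℝ) else 0

/-- `f z = E[W⁺ ψ_T(W⁻ z)] - z`. -/
noncomputable def fCont {Ω : Type*} [MeasureSpace Ω] (Wm Wp : Ω → ℝ) (T : Ω → WithTop ℕ)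
    (z : ℝ) : ℝ :=
  (∫ ω, Wp ω * psi1 (T ω) (Wm ω * z)) - z

/-- `d z = E[W⁻ W⁺ φ_T(W⁻ z)] - 1`. -/
noncomputable def dCont {Ω : Type*} [MeasureSpace Ω] (Wm Wp : Ω → ℝ) (T : Ω → WithTop ℕ)
    (z : ℝ) : ℝ :=
  (∫ ω, Wm ω * Wp ω * phi1 (T ω) (Wm ω * z)) - 1

/-! `ψ_l` is the upper tail of a Poisson law and `ψ_l' = φ_l`, so pointwise
`W⁺ ψ_T(W⁻ z) = W⁺ 1{T = 0} + ∫₀^z W⁻ W⁺ φ_T(W⁻ ξ) dξ`. Since `W⁻ W⁺` need not be integrable, `f` is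
not differentiated under the expectation; instead the integrand is nonnegative and its
`ξ`-integral is at most `W⁺`, so Fubini swaps `E` and `∫₀^z`. Continuity of `f` is dominated
convergence with majorant `W⁺`. Finally `f(0) = E[W⁺ 1{T = 0}] ≥ w₀ P(T = 0) > 0` and
`f(E[W⁺]) ≤ 0`, and the intermediate value theorem gives the root. -/

open Real Finset Function
open scoped Nat

lemma hasDerivAt_sum_range_pow_div_factorial (n : ℕ) (x : ℝ) :
    HasDerivAt (fun x : ℝ => ∑ j ∈ range (n + 1), x ^ j / (j ! : ℝ))
      (∑ j ∈ range n, x ^ j / (j ! : ℝ)) x := by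
  induction n with
  | zero => simpa using hasDerivAt_const x (1 : ℝ)
  | succ n ih =>
    have hterm : HasDerivAt (fun x : ℝ => x ^ (n + 1) / ((n + 1)! : ℝ)) (x ^ n / (n ! : ℝ)) x := by
      refine ((hasDerivAt_pow (n + 1) x).div_const _).congr_deriv ?_
      rw [Nat.factorial_succ]
      push_cast
      field_simp
    simp only [sum_range_succ _ (n + 1)]
    rw [sum_range_succ]
    exact ih.add hterm

lemma summable_poisson (x : ℝ) : Summable fun j : ℕ => exp (-x) * x ^ j / (j ! : ℝ) := by
  simpa only [mul_div_assoc] using (Real.summable_pow_div_factorial x).mul_left (exp (-x))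

lemma tsum_poisson (x : ℝ) : ∑' j : ℕ, exp (-x) * x ^ j / (j ! : ℝ) = 1 := by
  have hexp : ∑' j : ℕ, x ^ j / (j ! : ℝ) = exp x := by
    rw [Real.exp_eq_exp_ℝ, NormedSpace.exp_eq_tsum_div]
  simp only [mul_div_assoc, tsum_mul_left, hexp, ← Real.exp_add, neg_add_cancel, Real.exp_zero]

lemma psi1_coe (l : ℕ) (x : ℝ) :
    psi1 l x = 1 - exp (-x) * ∑ j ∈ range l, x ^ j / (j ! : ℝ) := by
  set f : ℕ → ℝ := fun j => if (l : WithTop ℕ) ≤ j then exp (-x) * x ^ j / (j ! : ℝ) else 0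
  have hshift : (fun j => f (j + l)) = fun j => exp (-x) * x ^ (j + l) / ((j + l)! : ℝ) := by
    ext j
    simp [f]
  have hf : Summable f := by
    rw [← summable_nat_add_iff l, hshift]
    exact (summable_nat_add_iff l).mpr (summable_poisson x)
  have hhead : ∑ j ∈ range l, f j = 0 :=
    sum_eq_zero fun j hj => by simp [f, (mem_range.mp hj).not_ge]
  rw [psi1, ← tsum_poisson x, ← (summable_poisson x).sum_add_tsum_nat_add l,
    ← hf.sum_add_tsum_nat_add l, hhead, hshift, mul_sum]
  simp only [mul_div_assoc]
  ring

lemma psi1_top (x : ℝ) : psi1 ⊤ x = 0 := by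
  simp [psi1]

lemma phi1_top (x : ℝ) : phi1 ⊤ x = 0 := by
  simp [phi1]

lemma phi1_zero (x : ℝ) : phi1 0 x = 0 := by
  simp [phi1]

lemma phi1_natCast_succ (n : ℕ) (x : ℝ) :
    phi1 (n + 1 : ℕ) x = exp (-x) * x ^ n / (n ! : ℝ) := by
  rw [phi1, tsum_eq_single n fun j hj => by simp [hj]]
  simp

lemma hasDerivAt_psi1 (l : WithTop ℕ) (x : ℝ) : HasDerivAt (psi1 l) (phi1 l x) x := by
  induction l using WithTop.recTopCoe with
  | top =>
    rw [funext psi1_top, phi1_top]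
    exact hasDerivAt_const x 0
  | coe l =>
    rw [← Nat.cast_withTop, funext (psi1_coe l)]
    cases l with
    | zero => simpa [phi1_zero] using hasDerivAt_const x (1 : ℝ)
    | succ n =>
      have hexp : HasDerivAt (fun x : ℝ => exp (-x)) (-exp (-x)) x := by
        simpa using (hasDerivAt_neg x).exp
      refine ((hexp.mul (hasDerivAt_sum_range_pow_div_factorial n x)).const_sub 1).congr_deriv ?_
      rw [phi1_natCast_succ, sum_range_succ]
      ring

lemma continuous_psi1 (l : WithTop ℕ) : Continuous (psi1 l) :=
  continuous_iff_continuousAt.mpr fun x => (hasDerivAt_psi1 l x).continuousAt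

lemma continuous_phi1 (l : WithTop ℕ) : Continuous (phi1 l) := by
  induction l using WithTop.recTopCoe with
  | top => simpa [funext phi1_top] using continuous_const
  | coe l =>
    cases l with
    | zero => simpa [funext phi1_zero] using continuous_const
    | succ n =>
      rw [← Nat.cast_withTop, funext (phi1_natCast_succ n)]
      fun_prop

lemma psi1_nonneg (l : WithTop ℕ) {x : ℝ} (hx : 0 ≤ x) : 0 ≤ psi1 l x :=
  tsum_nonneg fun j => by split_ifs <;> positivity

lemma phi1_nonneg (l : WithTop ℕ) {x : ℝ} (hx : 0 ≤ x) : 0 ≤ phi1 l x :=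
  tsum_nonneg fun j => by split_ifs <;> positivity

lemma psi1_le_one (l : WithTop ℕ) {x : ℝ} (hx : 0 ≤ x) : psi1 l x ≤ 1 := by
  induction l using WithTop.recTopCoe with
  | top => simp [psi1_top]
  | coe l =>
    rw [← Nat.cast_withTop, psi1_coe, sub_le_self_iff]
    positivity

lemma psi1_zero_right (l : WithTop ℕ) : psi1 l 0 = if l = 0 then 1 else 0 := by
  induction l using WithTop.recTopCoe with
  | top => simp [psi1_top]
  | coe l =>
    rw [← Nat.cast_withTop, psi1_coe]
    cases l <;> simp [sum_range_succ']

lemma intervalIntegral_mul_phi1_comp_mul (l : WithTop ℕ) (a z : ℝ) :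
    ∫ ξ in (0 : ℝ)..z, a * phi1 l (a * ξ) = psi1 l (a * z) - psi1 l 0 := by
  have hderiv : ∀ ξ ∈ uIcc (0 : ℝ) z,
      HasDerivAt (fun t => psi1 l (a * t)) (a * phi1 l (a * ξ)) ξ := fun ξ _ =>
    ((hasDerivAt_psi1 l (a * ξ)).comp ξ (hasDerivAt_const_mul a)).congr_deriv (mul_comm _ _)
  have hint : IntervalIntegrable (fun ξ => a * phi1 l (a * ξ)) volume 0 z :=
    (continuous_const.mul ((continuous_phi1 l).comp (continuous_const_mul a))).intervalIntegrable 0 z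
  simpa using intervalIntegral.integral_eq_sub_of_hasDerivAt hderiv hint

lemma measurable_apply_of_countable {α ι γ : Type*} [MeasurableSpace α] [MeasurableSpace ι]
    [Countable ι] [MeasurableSingletonClass ι] [MeasurableSpace γ] {g : ι → α → γ}
    (hg : ∀ i, Measurable (g i)) {T : α → ι} (hT : Measurable T) :
    Measurable fun a => g (T a) a :=
  (measurable_from_prod_countable_right (f := uncurry g) hg).comp (hT.prodMk measurable_id)

lemma intervalIntegrable_integral_and_integral_intervalIntegral_comm {α : Type*}
    [MeasurableSpace α] {μ : Measure α} [SFinite μ] {F : α → ℝ → ℝ} {z : ℝ} (hz : 0 ≤ z)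
    (hF_meas : Measurable (uncurry F)) (hF_nonneg : ∀ a, ∀ ξ ∈ Ioc 0 z, 0 ≤ F a ξ)
    (hF_sec : ∀ a, IntervalIntegrable (F a) volume 0 z)
    (hF_int : Integrable (fun a => ∫ ξ in 0..z, F a ξ) μ) :
    IntervalIntegrable (fun ξ => ∫ a, F a ξ ∂μ) volume 0 z ∧
      ∫ a, (∫ ξ in 0..z, F a ξ) ∂μ = ∫ ξ in 0..z, ∫ a, F a ξ ∂μ := by
  have hprod : Integrable (uncurry F) (μ.prod (volume.restrict (Ioc 0 z))) := by
    refine (integrable_prod_iff hF_meas.aestronglyMeasurable).mpr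
      ⟨ae_of_all _ fun a => (hF_sec a).1, hF_int.congr (ae_of_all _ fun a => ?_)⟩
    simp only [uncurry_apply_pair, intervalIntegral.integral_of_le hz]
    exact setIntegral_congr_fun measurableSet_Ioc fun ξ hξ =>
      (Real.norm_of_nonneg (hF_nonneg a ξ hξ)).symm
  refine ⟨(intervalIntegrable_iff_integrableOn_Ioc_of_le hz).mpr hprod.integral_prod_right, ?_⟩
  simp only [intervalIntegral.integral_of_le hz]
  exact integral_integral_swap hprod

lemma setIntegral_pos_of_const_le_ae {α : Type*} [MeasurableSpace α] {μ : Measure α}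
    [IsFiniteMeasure μ] {g : α → ℝ} {s : Set α} {c : ℝ} (hμs : 0 < μ s)
    (hc : 0 < c) (hg : Integrable g μ) (hcg : ∀ᵐ a ∂μ, c ≤ g a) :
    0 < ∫ a in s, g a ∂μ := by
  have hμs_real : 0 < μ.real s := ENNReal.toReal_pos hμs.ne' (measure_ne_top μ s)
  calc 0 < μ.real s * c := mul_pos hμs_real hc
    _ = ∫ _ in s, c ∂μ := by rw [setIntegral_const, smul_eq_mul]
    _ ≤ ∫ a in s, g a ∂μ :=
      setIntegral_mono_ae (integrableOn_const (measure_ne_top μ s)) hg.integrableOn hcg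

lemma exists_pos_eq_zero_of_continuousOn_Ici {f : ℝ → ℝ} (hf : ContinuousOn f (Ici 0))
    (hf0 : 0 < f 0) {b : ℝ} (hb : 0 ≤ b) (hfb : f b ≤ 0) : ∃ z, 0 < z ∧ f z = 0 := by
  obtain ⟨z, hz, hfz⟩ := intermediate_value_Ioc' hb (hf.mono Icc_subset_Ici_self) ⟨hfb, hf0⟩
  exact ⟨z, hz.1, hfz⟩

lemma norm_mul_psi1_le (l : WithTop ℕ) {w x : ℝ} (hw : 0 ≤ w) (hx : 0 ≤ x) :
    ‖w * psi1 l x‖ ≤ w := by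
  rw [Real.norm_of_nonneg (mul_nonneg hw (psi1_nonneg l hx))]
  exact mul_le_of_le_one_right hw (psi1_le_one l hx)

section Model

variable {Ω : Type*} [MeasureSpace Ω] {Wm Wp : Ω → ℝ} {T : Ω → WithTop ℕ}

lemma fCont_zero : fCont Wm Wp T 0 = ∫ ω, if T ω = 0 then Wp ω else 0 := by
  simp [fCont, psi1_zero_right, mul_ite]

lemma measurable_mul_psi1 (hWm_meas : Measurable Wm) (hWp_meas : Measurable Wp)
    (hT : Measurable T) (z : ℝ) : Measurable fun ω => Wp ω * psi1 (T ω) (Wm ω * z) :=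
  measurable_apply_of_countable (g := fun l ω => Wp ω * psi1 l (Wm ω * z))
    (fun l => hWp_meas.mul ((continuous_psi1 l).measurable.comp (hWm_meas.mul_const z))) hT

lemma integrable_mul_psi1 (hWm : ∀ ω, 0 ≤ Wm ω) (hWp : ∀ ω, 0 ≤ Wp ω)
    (hWm_meas : Measurable Wm) (hWp_meas : Measurable Wp) (hT : Measurable T)
    (hWp_int : Integrable Wp) {z : ℝ} (hz : 0 ≤ z) :
    Integrable fun ω => Wp ω * psi1 (T ω) (Wm ω * z) :=
  hWp_int.mono' (measurable_mul_psi1 hWm_meas hWp_meas hT z).aestronglyMeasurable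
    (ae_of_all _ fun ω => norm_mul_psi1_le _ (hWp ω) (mul_nonneg (hWm ω) hz))

lemma continuousOn_fCont (hWm : ∀ ω, 0 ≤ Wm ω) (hWp : ∀ ω, 0 ≤ Wp ω)
    (hWm_meas : Measurable Wm) (hWp_meas : Measurable Wp) (hT : Measurable T)
    (hWp_int : Integrable Wp) : ContinuousOn (fCont Wm Wp T) (Ici 0) := by
  refine ContinuousOn.sub ?_ continuousOn_id
  refine continuousOn_of_dominated
    (fun z _ => (measurable_mul_psi1 hWm_meas hWp_meas hT z).aestronglyMeasurable)
    (fun z hz => ae_of_all _ fun ω => norm_mul_psi1_le _ (hWp ω) (mul_nonneg (hWm ω) hz))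
    hWp_int (ae_of_all _ fun ω => ?_)
  exact (continuous_const.mul ((continuous_psi1 _).comp (continuous_const_mul _))).continuousOn

lemma fCont_le_integral_sub (hWm : ∀ ω, 0 ≤ Wm ω) (hWp : ∀ ω, 0 ≤ Wp ω)
    (hWm_meas : Measurable Wm) (hWp_meas : Measurable Wp) (hT : Measurable T)
    (hWp_int : Integrable Wp) {z : ℝ} (hz : 0 ≤ z) :
    fCont Wm Wp T z ≤ (∫ ω, Wp ω) - z :=
  sub_le_sub_right (integral_mono (integrable_mul_psi1 hWm hWp hWm_meas hWp_meas hT hWp_int hz)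
    hWp_int fun ω => (le_abs_self _).trans
      (norm_mul_psi1_le _ (hWp ω) (mul_nonneg (hWm ω) hz))) z

lemma fCont_eq_add_intervalIntegral_dCont [SFinite (volume : Measure Ω)]
    (hWm : ∀ ω, 0 ≤ Wm ω) (hWp : ∀ ω, 0 ≤ Wp ω) (hWm_meas : Measurable Wm)
    (hWp_meas : Measurable Wp) (hT : Measurable T) (hWp_int : Integrable Wp) {z : ℝ} (hz : 0 ≤ z) :
    fCont Wm Wp T z =
      (∫ ω, if T ω = 0 then Wp ω else 0) + ∫ ξ in (0 : ℝ)..z, dCont Wm Wp T ξ := by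
  set F : Ω → ℝ → ℝ := fun ω ξ => Wm ω * Wp ω * phi1 (T ω) (Wm ω * ξ)
  have hF_sec : ∀ ω, ∫ ξ in (0 : ℝ)..z, F ω ξ =
      Wp ω * psi1 (T ω) (Wm ω * z) - if T ω = 0 then Wp ω else 0 := fun ω => by
    have hFω : F ω = fun ξ => Wp ω * (Wm ω * phi1 (T ω) (Wm ω * ξ)) :=
      funext fun ξ => by simp only [F]; ring
    rw [hFω, intervalIntegral.integral_const_mul, intervalIntegral_mul_phi1_comp_mul,
      psi1_zero_right, mul_sub, mul_ite, mul_one, mul_zero]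
  have hind : Integrable fun ω => if T ω = 0 then Wp ω else 0 := by
    simpa [psi1_zero_right, mul_ite] using
      integrable_mul_psi1 hWm hWp hWm_meas hWp_meas hT hWp_int le_rfl
  have hG : Integrable fun ω => ∫ ξ in (0 : ℝ)..z, F ω ξ := by
    simp_rw [hF_sec]
    exact (integrable_mul_psi1 hWm hWp hWm_meas hWp_meas hT hWp_int hz).sub hind
  have hF_meas : Measurable (uncurry F) :=
    measurable_apply_of_countable (T := fun p : Ω × ℝ => T p.1)
      (g := fun (l : WithTop ℕ) (p : Ω × ℝ) => Wm p.1 * Wp p.1 * phi1 l (Wm p.1 * p.2))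
      (fun l => ((hWm_meas.comp measurable_fst).mul (hWp_meas.comp measurable_fst)).mul
        ((continuous_phi1 l).measurable.comp ((hWm_meas.comp measurable_fst).mul measurable_snd)))
      (hT.comp measurable_fst)
  have hF_nonneg : ∀ ω, ∀ ξ ∈ Ioc 0 z, 0 ≤ F ω ξ := fun ω ξ hξ =>
    mul_nonneg (mul_nonneg (hWm ω) (hWp ω)) (phi1_nonneg _ (mul_nonneg (hWm ω) hξ.1.le))
  have hF_cont : ∀ ω, Continuous (F ω) := fun ω =>
    continuous_const.mul ((continuous_phi1 _).comp (continuous_const_mul _))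
  obtain ⟨hII, hswap⟩ := intervalIntegrable_integral_and_integral_intervalIntegral_comm hz hF_meas
    hF_nonneg (fun ω => (hF_cont ω).intervalIntegrable 0 z) hG
  have hdCont : ∫ ξ in (0 : ℝ)..z, dCont Wm Wp T ξ = (∫ ξ in (0 : ℝ)..z, ∫ ω, F ω ξ) - z := by
    change ∫ ξ in (0 : ℝ)..z, ((∫ ω, F ω ξ) - 1) = _
    rw [intervalIntegral.integral_sub hII intervalIntegrable_const, intervalIntegral.integral_const,
      smul_eq_mul, mul_one, sub_zero]
  calc fCont Wm Wp T z
      = (∫ ω, (if T ω = 0 then Wp ω else 0) + ∫ ξ in (0 : ℝ)..z, F ω ξ) - z := by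
        simp only [hF_sec, add_sub_cancel, fCont]
    _ = (∫ ω, if T ω = 0 then Wp ω else 0) + ∫ ξ in (0 : ℝ)..z, dCont Wm Wp T ξ := by
        rw [integral_add hind hG, hswap, hdCont, add_sub_assoc]

end Model

theorem stmt_0_general {Ω : Type*} [MeasureSpace Ω] [IsProbabilityMeasure (volume : Measure Ω)]
    (Wm Wp : Ω → ℝ) (T : Ω → WithTop ℕ)
    (hWm_nonneg : ∀ ω, 0 ≤ Wm ω) (hWp_nonneg : ∀ ω, 0 ≤ Wp ω)
    (hWm_meas : Measurable Wm) (hWp_meas : Measurable Wp)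
    (hT_meas : ∀ l : WithTop ℕ, MeasurableSet {ω | T ω = l})
    (hWp_int : Integrable Wp) :
    ContinuousOn (fCont Wm Wp T) (Set.Ici 0) ∧
    (∀ z : ℝ, 0 ≤ z →
      fCont Wm Wp T z =
        (∫ ω, if T ω = 0 then Wp ω else 0) + ∫ ξ in (0:ℝ)..z, dCont Wm Wp T ξ) ∧
    (0 < volume {ω | T ω = 0} →
      ∀ w₀ : ℝ, 0 < w₀ → (∀ᵐ ω ∂(volume : Measure Ω), w₀ ≤ Wp ω) →
        ∃ zhat : ℝ, 0 < zhat ∧ fCont Wm Wp T zhat = 0) := by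
  have hT : Measurable T := measurable_to_countable' hT_meas
  have hcont := continuousOn_fCont hWm_nonneg hWp_nonneg hWm_meas hWp_meas hT hWp_int
  refine ⟨hcont, fun z hz => fCont_eq_add_intervalIntegral_dCont hWm_nonneg hWp_nonneg hWm_meas
    hWp_meas hT hWp_int hz, fun hT0 w₀ hw₀ hWp_ge => ?_⟩
  have hf0 : 0 < fCont Wm Wp T 0 := by
    have hind : (fun ω => if T ω = 0 then Wp ω else 0) = {ω | T ω = 0}.indicator Wp := by
      ext ω
      simp [Set.indicator_apply]
    rw [fCont_zero, hind, integral_indicator (hT_meas 0)]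
    exact setIntegral_pos_of_const_le_ae hT0 hw₀ hWp_int hWp_ge
  have hWp_mean : 0 ≤ ∫ ω, Wp ω := integral_nonneg hWp_nonneg
  refine exists_pos_eq_zero_of_continuousOn_Ici hcont hf0 hWp_mean ?_
  simpa using fCont_le_integral_sub hWm_nonneg hWp_nonneg hWm_meas hWp_meas hT hWp_int hWp_mean

/-- `f` is continuous on `[0,∞)`, admits the representation
`f(z) = E[W⁺ 1{T = 0}] + ∫₀^z d(ξ) dξ`, and -- provided `P(T = 0) > 0` and `W⁺` is a.s. bounded
below by a constant `w₀ > 0` -- has a strictly positive root. -/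
theorem stmt_0 {Ω : Type*} [MeasureSpace Ω] [IsProbabilityMeasure (volume : Measure Ω)]
    (Wm Wp : Ω → ℝ) (T : Ω → WithTop ℕ)
    (hWm_nonneg : ∀ ω, 0 ≤ Wm ω) (hWp_nonneg : ∀ ω, 0 ≤ Wp ω)
    (hWm_meas : Measurable Wm) (hWp_meas : Measurable Wp)
    (hT_meas : ∀ l : WithTop ℕ, MeasurableSet {ω | T ω = l})
    (hWm_int : Integrable Wm) (hWp_int : Integrable Wp) :
    ContinuousOn (fCont Wm Wp T) (Set.Ici 0) ∧
    (∀ z : ℝ, 0 ≤ z →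
      fCont Wm Wp T z =
        (∫ ω, if T ω = 0 then Wp ω else 0) + ∫ ξ in (0:ℝ)..z, dCont Wm Wp T ξ) ∧
    (0 < volume {ω | T ω = 0} →
      ∀ w₀ : ℝ, 0 < w₀ → (∀ᵐ ω ∂(volume : Measure Ω), w₀ ≤ Wp ω) →
        ∃ zhat : ℝ, 0 < zhat ∧ fCont Wm Wp T zhat = 0) :=
  stmt_0_general Wm Wp T hWm_nonneg hWp_nonneg hWm_meas hWp_meas hT_meas hWp_int
end

section
/- Each function f^{r,α,β}, (r,α,β) ∈ V, and the function g are continuous at every z ∈ [0,∞)^V. Moreover, each f^{r,α,β} is monotonically non-decreasing in every coordinate z^{r',α',β'} with (r',α',β') ≠ (r,α,β). -/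
/-!
For `q ≥ 0` and `m : ℤ`, `ψ(q; m) = 1 - Σ_{k ∈ B_m} Π_s Poi(q_s)(k_s)` where
`B_m = {k : Σ_s s k_s < m}` is finite, and `ψ(q; ∞) = 0`. Hence `ψ` is continuous in `q` on the
orthant with values in `[0, 1]`, and `f` and `g` are continuous by dominated convergence, with
`W^{+,r,α}` resp. `S` as dominating function.

`B_m` is a lower set. For a finite lower set `B`, differentiating `Σ_{k ∈ B} Π_s Poi(q_s)(k_s)` in
`q_i` with `d/dt Poi(t)(j) = Poi(t)(j-1) - Poi(t)(j)` gives a nonpositive derivative, because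
`k ↦ k - e_i` maps `{k ∈ B : k_i ≠ 0}` injectively into `B`. So `ψ` is non-decreasing in `q`, and
since each `q_s` is non-decreasing in `z`, so is the expectation term of `f^{r,α,β}`; the linear
term `-z^{r,α,β}` does not involve the other coordinates.
-/

open MeasureTheory Filter Set Topology

open Classical in
/-- Probability that a Poisson(q) random variable equals `k`. -/
noncomputable def poisProb (q : ℝ) (k : ℕ) : ℝ := Real.exp (-q) * q ^ k / (Nat.factorial k : ℝ)

open Classical in
/-- `psiMulti q l = P(∑_{s=1}^R s · Q_s ≥ l)` for independent `Q_s ~ Poi(q s)`;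
in particular it equals `1` for `l ≤ 0` and `0` for `l = ∞`. -/
noncomputable def psiMulti {R : ℕ} (q : Fin R → ℝ) (l : WithTop ℤ) : ℝ :=
  ∑' k : Fin R → ℕ,
    if l ≤ ((((∑ s : Fin R, ((s : ℕ) + 1) * k s) : ℕ) : ℤ) : WithTop ℤ) then
      ∏ s, poisProb (q s) (k s)
    else 0

/-- Embedding of `ℕ ∪ {∞}` into `ℤ ∪ {∞}`. -/
noncomputable def natCastTop (c : WithTop ℕ) : WithTop ℤ := WithTop.map (fun n : ℕ => (n : ℤ)) c

/-- The function `f^{r,α,β}(z) = E[W^{+,r,α} ψ(∑_γ W^{-,1,γ} z^{1,β,γ}, …, ∑_γ W^{-,R,γ} z^{R,β,γ}; C)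
1{A=β}] − z^{r,α,β}` (with `v = (r,α,β)`). -/
noncomputable def fV {Ω : Type*} [MeasureSpace Ω] {R T : ℕ}
    (Wm Wp : Ω → Fin R → Fin T → ℝ) (C : Ω → WithTop ℕ) (A : Ω → Fin T)
    (v : Fin R × Fin T × Fin T) (z : Fin R × Fin T × Fin T → ℝ) : ℝ :=
  (∫ ω, if A ω = v.2.2 then
      Wp ω v.1 v.2.1 *
        psiMulti (fun s => ∑ γ, Wm ω s γ * z (s, v.2.2, γ)) (natCastTop (C ω))
    else 0) - z v

/-- The function `g(z) = ∑_β E[S ψ(…; C) 1{A=β}]`. -/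
noncomputable def gV {Ω : Type*} [MeasureSpace Ω] {R T : ℕ}
    (Wm : Ω → Fin R → Fin T → ℝ) (S : Ω → ℝ) (C : Ω → WithTop ℕ) (A : Ω → Fin T)
    (z : Fin R × Fin T × Fin T → ℝ) : ℝ :=
  ∑ β, ∫ ω, if A ω = β then
      S ω * psiMulti (fun s => ∑ γ, Wm ω s γ * z (s, β, γ)) (natCastTop (C ω))
    else 0

/-- The nonnegative orthant `[0,∞)^V`. -/
def nonnegV (R T : ℕ) : Set ((Fin R × Fin T × Fin T) → ℝ) := {z | ∀ v, 0 ≤ z v}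

/-- The set `P = ∩_{(r,α,β) ∈ V} {z ∈ [0,∞)^V : f^{r,α,β}(z) ≥ 0}`. -/
noncomputable def PsetV {Ω : Type*} [MeasureSpace Ω] {R T : ℕ}
    (Wm Wp : Ω → Fin R → Fin T → ℝ) (C : Ω → WithTop ℕ) (A : Ω → Fin T) :
    Set ((Fin R × Fin T × Fin T) → ℝ) :=
  {z | z ∈ nonnegV R T ∧ ∀ v, 0 ≤ fV Wm Wp C A v z}

/-- `P₀`, the largest connected subset of `P` containing `0`. -/
noncomputable def P0V {Ω : Type*} [MeasureSpace Ω] {R T : ℕ}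
    (Wm Wp : Ω → Fin R → Fin T → ℝ) (C : Ω → WithTop ℕ) (A : Ω → Fin T) :
    Set ((Fin R × Fin T × Fin T) → ℝ) :=
  connectedComponentIn (PsetV Wm Wp C A) 0

/-- `z*`, defined by `(z*)^{r,α,β} = sup_{z ∈ P₀} z^{r,α,β}`. -/
noncomputable def zStarV {Ω : Type*} [MeasureSpace Ω] {R T : ℕ}
    (Wm Wp : Ω → Fin R → Fin T → ℝ) (C : Ω → WithTop ℕ) (A : Ω → Fin T) :
    (Fin R × Fin T × Fin T) → ℝ :=
  fun v => sSup ((fun z => z v) '' P0V Wm Wp C A)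

lemma poisProb_nonneg {q : ℝ} (hq : 0 ≤ q) (k : ℕ) : 0 ≤ poisProb q k := by
  unfold poisProb; positivity

lemma hasSum_poisProb {q : ℝ} (hq : 0 ≤ q) : HasSum (poisProb q) 1 :=
  ProbabilityTheory.hasSum_one_poissonMeasure ⟨q, hq⟩

lemma continuous_poisProb (k : ℕ) : Continuous (poisProb · k) := by
  unfold poisProb; fun_prop

lemma hasDerivAt_poisProb (j : ℕ) (t : ℝ) :
    HasDerivAt (poisProb · j) ((if j = 0 then 0 else poisProb t (j - 1)) - poisProb t j) t := by
  have h := ((hasDerivAt_neg t).exp.fun_mul (hasDerivAt_pow j t)).div_const (j.factorial : ℝ)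
  refine h.congr_deriv ?_
  rcases j with _ | j
  · simp [poisProb]
  · simp only [poisProb, Nat.factorial_succ, add_tsub_cancel_right, Nat.add_one_ne_zero, if_false]
    push_cast
    field_simp
    ring

theorem hasSum_fin_pi_prod {κ : Type*} {n : ℕ} {f : Fin n → κ → ℝ} {a : Fin n → ℝ}
    (hf : ∀ i, 0 ≤ f i) (ha : ∀ i, HasSum (f i) (a i)) :
    HasSum (fun k : Fin n → κ => ∏ i, f i (k i)) (∏ i, a i) := by
  induction n with
  | zero => simp
  | succ n ih =>
    have ih' := ih (fun i => hf i.succ) (fun i => ha i.succ)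
    have hg : (0 : (Fin n → κ) → ℝ) ≤ fun k => ∏ i, f i.succ (k i) :=
      fun k => Finset.prod_nonneg fun i _ => hf i.succ (k i)
    have hs := (ha 0).summable.mul_of_nonneg ih'.summable (hf 0) hg
    rw [← (Fin.consEquiv fun _ => κ).hasSum_iff, Fin.prod_univ_succ]
    refine ((ha 0).mul ih' hs).congr_fun fun p => ?_
    simp [Fin.consEquiv, Fin.prod_univ_succ]

section LowerSet

open Finset Function

variable {ι : Type*} [Fintype ι] [DecidableEq ι] {B : Finset (ι → ℕ)}

lemma sum_poisProb_pred_mul_le (hB : IsLowerSet (B : Set (ι → ℕ))) (i : ι)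
    {c : (ι → ℕ) → ℝ} (hc : 0 ≤ c) (hci : ∀ k j, c (update k i j) = c k) {t : ℝ} (ht : 0 ≤ t) :
    ∑ k ∈ B with k i ≠ 0, poisProb t (k i - 1) * c k ≤ ∑ k ∈ B, poisProb t (k i) * c k := by
  set lower : (ι → ℕ) → (ι → ℕ) := fun k => update k i (k i - 1)
  have hinj : Set.InjOn lower ↑(B.filter (· i ≠ 0)) := by
    intro k hk k' hk' h
    have hki := (mem_filter.1 hk).2
    have hk'i := (mem_filter.1 hk').2
    have hi := congrFun h i
    simp only [lower, update_self] at hi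
    have hrec : ∀ k, k = update (lower k) i (k i) := fun k => by simp [lower]
    rw [hrec k, hrec k', h]
    congr 1
    omega
  calc ∑ k ∈ B with k i ≠ 0, poisProb t (k i - 1) * c k
      = ∑ k ∈ (B.filter (· i ≠ 0)).image lower, poisProb t (k i) * c k := by
        rw [sum_image hinj]
        exact sum_congr rfl fun k _ => by simp [lower, hci]
    _ ≤ ∑ k ∈ B, poisProb t (k i) * c k := by
        refine sum_le_sum_of_subset_of_nonneg ?_ fun k _ _ =>
          mul_nonneg (poisProb_nonneg ht _) (hc k)
        intro k hk
        obtain ⟨k, hkB, rfl⟩ := mem_image.1 hk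
        exact hB (update_le_self_iff.2 (Nat.sub_le _ _)) (mem_filter.1 hkB).1

lemma antitoneOn_sum_poisProb_mul (hB : IsLowerSet (B : Set (ι → ℕ))) (i : ι)
    {c : (ι → ℕ) → ℝ} (hc : 0 ≤ c) (hci : ∀ k j, c (update k i j) = c k) :
    AntitoneOn (fun t => ∑ k ∈ B, poisProb t (k i) * c k) (Set.Ici 0) := by
  have hderiv : ∀ t, HasDerivAt (fun t => ∑ k ∈ B, poisProb t (k i) * c k)
      (∑ k ∈ B with k i ≠ 0, poisProb t (k i - 1) * c k - ∑ k ∈ B, poisProb t (k i) * c k) t := by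
    intro t
    refine (HasDerivAt.fun_sum fun k _ =>
      (hasDerivAt_poisProb (k i) t).mul_const (c k)).congr_deriv ?_
    rw [sum_filter, ← sum_sub_distrib]
    exact sum_congr rfl fun k _ => by by_cases h : k i = 0 <;> simp [h, sub_mul]
  refine antitoneOn_of_deriv_nonpos (convex_Ici 0)
    (fun t _ => (hderiv t).continuousAt.continuousWithinAt)
    (fun t _ => (hderiv t).differentiableAt.differentiableWithinAt) fun t ht => ?_
  rw [(hderiv t).deriv, sub_nonpos]
  rw [interior_Ici] at ht
  exact sum_poisProb_pred_mul_le hB i hc hci ht.le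

lemma prod_poisProb_update (q : ι → ℝ) (i : ι) (t : ℝ) (k : ι → ℕ) :
    ∏ s, poisProb (update q i t s) (k s) =
      poisProb t (k i) * ∏ s ∈ univ.erase i, poisProb (q s) (k s) := by
  rw [← mul_prod_erase univ _ (mem_univ i), update_self]
  congr 1
  exact prod_congr rfl fun s hs => by rw [update_of_ne (ne_of_mem_erase hs)]

lemma sum_prod_poisProb_update_le (hB : IsLowerSet (B : Set (ι → ℕ))) {q : ι → ℝ}
    (hq : 0 ≤ q) (i : ι) {t : ℝ} (ht : q i ≤ t) :
    ∑ k ∈ B, ∏ s, poisProb (update q i t s) (k s) ≤ ∑ k ∈ B, ∏ s, poisProb (q s) (k s) := by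
  set c : (ι → ℕ) → ℝ := fun k => ∏ s ∈ univ.erase i, poisProb (q s) (k s)
  have hc : 0 ≤ c := fun k => prod_nonneg fun s _ => poisProb_nonneg (hq s) _
  have hci : ∀ k j, c (update k i j) = c k := fun k j =>
    prod_congr rfl fun s hs => by rw [update_of_ne (ne_of_mem_erase hs)]
  have hrepr : ∀ t, ∑ k ∈ B, ∏ s, poisProb (update q i t s) (k s) =
      ∑ k ∈ B, poisProb t (k i) * c k := fun t => sum_congr rfl fun k _ => prod_poisProb_update q i t k
  conv_rhs => rw [← update_eq_self i q]
  rw [hrepr, hrepr]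
  exact antitoneOn_sum_poisProb_mul hB i hc hci (Set.mem_Ici.2 (hq i))
    (Set.mem_Ici.2 ((hq i).trans ht)) ht

theorem antitoneOn_sum_prod_poisProb (hB : IsLowerSet (B : Set (ι → ℕ))) :
    AntitoneOn (fun q : ι → ℝ => ∑ k ∈ B, ∏ s, poisProb (q s) (k s)) (Set.Ici 0) := by
  intro q hq q' hq' hle
  rw [Set.mem_Ici] at hq hq'
  have key : ∀ S : Finset ι, ∑ k ∈ B, ∏ s, poisProb (S.piecewise q' q s) (k s) ≤
      ∑ k ∈ B, ∏ s, poisProb (q s) (k s) := by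
    intro S
    induction S using Finset.induction_on with
    | empty => simp
    | insert i S hi ih =>
      have hS : 0 ≤ S.piecewise q' q := S.le_piecewise_of_le_of_le hq' hq
      rw [Finset.piecewise_insert]
      refine (sum_prod_poisProb_update_le hB hS i ?_).trans ih
      rw [Finset.piecewise_eq_of_notMem _ _ _ hi]
      exact hle i
  simpa using key univ

end LowerSet

section ClosedForm

open Finset

variable {R : ℕ}

def weight (k : Fin R → ℕ) : ℕ := ∑ s : Fin R, ((s : ℕ) + 1) * k s

def weightBelow (R : ℕ) (m : ℤ) : Finset (Fin R → ℕ) :=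
  {k ∈ Fintype.piFinset fun _ => range m.toNat | (weight k : ℤ) < m}

lemma le_weight (k : Fin R → ℕ) (s : Fin R) : k s ≤ weight k :=
  (Nat.le_mul_of_pos_left _ s.val.succ_pos).trans
    (single_le_sum (f := fun s : Fin R => ((s : ℕ) + 1) * k s) (fun _ _ => Nat.zero_le _)
      (mem_univ s))

lemma mem_weightBelow {m : ℤ} {k : Fin R → ℕ} : k ∈ weightBelow R m ↔ (weight k : ℤ) < m := by
  refine ⟨fun h => (mem_filter.1 h).2, fun h => mem_filter.2 ⟨?_, h⟩⟩
  refine Fintype.mem_piFinset.2 fun s => mem_range.2 ?_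
  have := le_weight k s
  omega

lemma isLowerSet_weightBelow (m : ℤ) : IsLowerSet (weightBelow R m : Set (Fin R → ℕ)) := by
  intro k k' hle hk
  rw [mem_coe, mem_weightBelow] at hk ⊢
  have : weight k' ≤ weight k := sum_le_sum fun s _ => Nat.mul_le_mul_left _ (hle s)
  omega

lemma hasSum_prod_poisProb {q : Fin R → ℝ} (hq : 0 ≤ q) :
    HasSum (fun k : Fin R → ℕ => ∏ s, poisProb (q s) (k s)) 1 := by
  simpa using hasSum_fin_pi_prod (fun s => poisProb_nonneg (hq s)) fun s => hasSum_poisProb (hq s)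

/-- The finite-sum form of `psiMulti`, equal to it for `q ≥ 0` (`psiMulti_eq_psiFin`) but
continuous in `q` on all of `Fin R → ℝ`. -/
noncomputable def psiFin (q : Fin R → ℝ) : WithTop ℤ → ℝ
  | ⊤ => 0
  | (m : ℤ) => 1 - ∑ k ∈ weightBelow R m, ∏ s, poisProb (q s) (k s)

@[simp] lemma psiFin_top (q : Fin R → ℝ) : psiFin q ⊤ = 0 := rfl

@[simp] lemma psiFin_coe (q : Fin R → ℝ) (m : ℤ) :
    psiFin q m = 1 - ∑ k ∈ weightBelow R m, ∏ s, poisProb (q s) (k s) := rfl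

lemma psiMulti_eq_psiFin {q : Fin R → ℝ} (hq : 0 ≤ q) (l : WithTop ℤ) :
    psiMulti q l = psiFin q l := by
  cases l with
  | top => exact (tsum_congr fun k => if_neg (WithTop.not_top_le_coe _)).trans tsum_zero
  | coe m =>
    set P := fun k : Fin R → ℕ => ∏ s, poisProb (q s) (k s)
    have hlow : HasSum (fun k => if (weight k : ℤ) < m then P k else 0)
        (∑ k ∈ weightBelow R m, P k) := by
      have h : HasSum (fun k => if (weight k : ℤ) < m then P k else 0)
          (∑ k ∈ weightBelow R m, if (weight k : ℤ) < m then P k else 0) :=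
        hasSum_sum_of_ne_finset_zero fun k hk => if_neg (mt mem_weightBelow.2 hk)
      rwa [sum_congr rfl fun k hk => if_pos (mem_weightBelow.1 hk)] at h
    rw [psiMulti, psiFin_coe, ← ((hasSum_prod_poisProb hq).sub hlow).tsum_eq]
    refine tsum_congr fun k => ?_
    change (if (m : WithTop ℤ) ≤ ((weight k : ℤ) : WithTop ℤ) then P k else 0) =
      P k - if (weight k : ℤ) < m then P k else 0
    simp only [WithTop.coe_le_coe]
    split_ifs <;> first | omega | ring

lemma continuous_psiFin (l : WithTop ℤ) : Continuous fun q : Fin R → ℝ => psiFin q l := by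
  cases l with
  | top => exact continuous_const
  | coe m =>
    exact continuous_const.sub <| continuous_finsetSum _ fun k _ =>
      continuous_finsetProd _ fun s _ => (continuous_poisProb _).comp (continuous_apply s)

lemma psiFin_mem_Icc {q : Fin R → ℝ} (hq : 0 ≤ q) (l : WithTop ℤ) : psiFin q l ∈ Set.Icc 0 1 := by
  cases l with
  | top => simp
  | coe m =>
    have hP : ∀ k : Fin R → ℕ, 0 ≤ ∏ s, poisProb (q s) (k s) :=
      fun k => prod_nonneg fun s _ => poisProb_nonneg (hq s) _
    rw [psiFin_coe, Set.mem_Icc, sub_nonneg, sub_le_self_iff]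
    exact ⟨sum_le_hasSum _ (fun k _ => hP k) (hasSum_prod_poisProb hq), sum_nonneg fun k _ => hP k⟩

lemma psiFin_mono {q q' : Fin R → ℝ} (hq : 0 ≤ q) (hle : q ≤ q') (l : WithTop ℤ) :
    psiFin q l ≤ psiFin q' l := by
  cases l with
  | top => simp
  | coe m =>
    exact sub_le_sub_left (antitoneOn_sum_prod_poisProb (isLowerSet_weightBelow m) hq
      (hq.trans hle) hle) 1

lemma psiMulti_mem_Icc {q : Fin R → ℝ} (hq : 0 ≤ q) (l : WithTop ℤ) :
    psiMulti q l ∈ Set.Icc 0 1 :=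
  psiMulti_eq_psiFin hq l ▸ psiFin_mem_Icc hq l

lemma psiMulti_mono {q q' : Fin R → ℝ} (hq : 0 ≤ q) (hle : q ≤ q') (l : WithTop ℤ) :
    psiMulti q l ≤ psiMulti q' l := by
  rw [psiMulti_eq_psiFin hq, psiMulti_eq_psiFin (hq.trans hle)]
  exact psiFin_mono hq hle l

end ClosedForm

section Expectation

open Finset

variable {Ω : Type*} {R T : ℕ} {Wm : Ω → Fin R → Fin T → ℝ} {C : Ω → WithTop ℕ} {A : Ω → Fin T}
  {W : Ω → ℝ} {β : Fin T} {z z' : Fin R × Fin T × Fin T → ℝ}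

variable (Wm) in
def poisParams (β : Fin T) (z : Fin R × Fin T × Fin T → ℝ) (ω : Ω) : Fin R → ℝ :=
  fun s => ∑ γ, Wm ω s γ * z (s, β, γ)

variable (Wm C A) in
noncomputable def psiIntegrand (W : Ω → ℝ) (β : Fin T) (z : Fin R × Fin T × Fin T → ℝ)
    (ω : Ω) : ℝ :=
  if A ω = β then W ω * psiMulti (poisParams Wm β z ω) (natCastTop (C ω)) else 0

lemma poisParams_nonneg (hWm : ∀ ω r α, 0 ≤ Wm ω r α) (hz : z ∈ nonnegV R T) (ω : Ω) :
    0 ≤ poisParams Wm β z ω :=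
  fun s => sum_nonneg fun γ _ => mul_nonneg (hWm ω s γ) (hz _)

lemma poisParams_mono (hWm : ∀ ω r α, 0 ≤ Wm ω r α) (hle : z ≤ z') (ω : Ω) :
    poisParams Wm β z ω ≤ poisParams Wm β z' ω :=
  fun s => sum_le_sum fun γ _ => mul_le_mul_of_nonneg_left (hle _) (hWm ω s γ)

lemma norm_psiIntegrand_le (hWm : ∀ ω r α, 0 ≤ Wm ω r α) (hW : 0 ≤ W) (hz : z ∈ nonnegV R T)
    (ω : Ω) : ‖psiIntegrand Wm C A W β z ω‖ ≤ W ω := by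
  have hψ := psiMulti_mem_Icc (poisParams_nonneg (β := β) hWm hz ω) (natCastTop (C ω))
  unfold psiIntegrand
  split_ifs
  · rw [Real.norm_of_nonneg (mul_nonneg (hW ω) hψ.1)]
    exact mul_le_of_le_one_right (hW ω) hψ.2
  · simpa using hW ω

lemma psiIntegrand_mono (hWm : ∀ ω r α, 0 ≤ Wm ω r α) (hW : 0 ≤ W) (hz : z ∈ nonnegV R T)
    (hle : z ≤ z') (ω : Ω) : psiIntegrand Wm C A W β z ω ≤ psiIntegrand Wm C A W β z' ω := by
  unfold psiIntegrand
  split_ifs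
  · exact mul_le_mul_of_nonneg_left
      (psiMulti_mono (poisParams_nonneg hWm hz ω) (poisParams_mono hWm hle ω) _) (hW ω)
  · exact le_rfl

lemma continuousOn_psiIntegrand (hWm : ∀ ω r α, 0 ≤ Wm ω r α) (ω : Ω) :
    ContinuousOn (fun z => psiIntegrand Wm C A W β z ω) (nonnegV R T) := by
  unfold psiIntegrand
  split_ifs
  · have h : Continuous fun z => W ω * psiFin (poisParams Wm β z ω) (natCastTop (C ω)) :=
      continuous_const.mul <| (continuous_psiFin _).comp <| by unfold poisParams; fun_prop
    exact h.continuousOn.congr fun z hz => by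
      rw [psiMulti_eq_psiFin (poisParams_nonneg hWm hz ω)]
  · exact continuousOn_const

lemma measurable_psiIntegrand [MeasurableSpace Ω] (hWm : ∀ ω r α, 0 ≤ Wm ω r α)
    (hWm_meas : ∀ r α, Measurable fun ω => Wm ω r α) (hC : Measurable C) (hA : Measurable A)
    (hW : Measurable W) (hz : z ∈ nonnegV R T) :
    Measurable (psiIntegrand Wm C A W β z) := by
  have hparams : Measurable (poisParams Wm β z) :=
    measurable_pi_lambda _ fun s => Finset.measurable_sum _ fun γ _ => (hWm_meas s γ).mul_const _
  have hpsi : Measurable fun ω => psiMulti (poisParams Wm β z ω) (natCastTop (C ω)) := by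
    simp_rw [psiMulti_eq_psiFin (poisParams_nonneg hWm hz _)]
    exact (measurable_from_prod_countable_left (f := fun p : (Fin R → ℝ) × WithTop ℕ =>
      psiFin p.1 (natCastTop p.2)) fun c => (continuous_psiFin (natCastTop c)).measurable).comp
      (hparams.prodMk hC)
  exact Measurable.ite (hA (measurableSet_singleton β)) (hW.mul hpsi) measurable_const

variable [MeasureSpace Ω]

variable (Wm C A) in
noncomputable def psiMean (W : Ω → ℝ) (β : Fin T) (z : Fin R × Fin T × Fin T → ℝ) : ℝ :=
  ∫ ω, psiIntegrand Wm C A W β z ω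

lemma integrable_psiIntegrand (hWm : ∀ ω r α, 0 ≤ Wm ω r α)
    (hWm_meas : ∀ r α, Measurable fun ω => Wm ω r α) (hC : Measurable C) (hA : Measurable A)
    (hW_meas : Measurable W) (hW : 0 ≤ W) (hW_int : Integrable W) (hz : z ∈ nonnegV R T) :
    Integrable (psiIntegrand Wm C A W β z) :=
  hW_int.mono' (measurable_psiIntegrand hWm hWm_meas hC hA hW_meas hz).aestronglyMeasurable
    (ae_of_all _ (norm_psiIntegrand_le hWm hW hz))

theorem continuousOn_psiMean (hWm : ∀ ω r α, 0 ≤ Wm ω r α)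
    (hWm_meas : ∀ r α, Measurable fun ω => Wm ω r α) (hC : Measurable C) (hA : Measurable A)
    (hW_meas : Measurable W) (hW : 0 ≤ W) (hW_int : Integrable W) :
    ContinuousOn (psiMean Wm C A W β) (nonnegV R T) :=
  continuousOn_of_dominated
    (fun _ hz => (measurable_psiIntegrand hWm hWm_meas hC hA hW_meas hz).aestronglyMeasurable)
    (fun _ hz => ae_of_all _ (norm_psiIntegrand_le hWm hW hz)) hW_int
    (ae_of_all _ (continuousOn_psiIntegrand hWm))

theorem monotoneOn_psiMean (hWm : ∀ ω r α, 0 ≤ Wm ω r α)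
    (hWm_meas : ∀ r α, Measurable fun ω => Wm ω r α) (hC : Measurable C) (hA : Measurable A)
    (hW_meas : Measurable W) (hW : 0 ≤ W) (hW_int : Integrable W) :
    MonotoneOn (psiMean Wm C A W β) (nonnegV R T) := fun _ hz _ hz' hle =>
  integral_mono (integrable_psiIntegrand hWm hWm_meas hC hA hW_meas hW hW_int hz)
    (integrable_psiIntegrand hWm hWm_meas hC hA hW_meas hW hW_int hz')
    (psiIntegrand_mono hWm hW hz hle)

end Expectation

theorem stmt_2_general
    {Ω : Type*} [MeasureSpace Ω]
    {R T : ℕ}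
    (Wm Wp : Ω → Fin R → Fin T → ℝ) (S : Ω → ℝ) (C : Ω → WithTop ℕ) (A : Ω → Fin T)
    (hWm_nonneg : ∀ ω r α, 0 ≤ Wm ω r α) (hWp_nonneg : ∀ ω r α, 0 ≤ Wp ω r α)
    (hS_nonneg : ∀ ω, 0 ≤ S ω)
    (hWm_meas : ∀ r α, Measurable fun ω => Wm ω r α)
    (hWp_meas : ∀ r α, Measurable fun ω => Wp ω r α)
    (hS_meas : Measurable S) (hA_meas : Measurable A)
    (hC_meas : ∀ l : WithTop ℕ, MeasurableSet {ω | C ω = l})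
    (hWp_int : ∀ r α, Integrable fun ω => Wp ω r α)
    (hS_int : Integrable S)
    :
    (∀ v, ContinuousOn (fV Wm Wp C A v) (nonnegV R T)) ∧
    ContinuousOn (gV Wm S C A) (nonnegV R T) ∧
    (∀ v u : Fin R × Fin T × Fin T, u ≠ v → ∀ z ∈ nonnegV R T, ∀ t t' : ℝ,
      0 ≤ t → t ≤ t' →
        fV Wm Wp C A v (Function.update z u t) ≤ fV Wm Wp C A v (Function.update z u t')) := by
  have hC : Measurable C := measurable_to_countable' hC_meas
  refine ⟨fun v => ?_, ?_, fun v u huv z hz t t' ht htt' => ?_⟩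
  · exact (continuousOn_psiMean hWm_nonneg hWm_meas hC hA_meas (hWp_meas v.1 v.2.1)
      (fun ω => hWp_nonneg ω v.1 v.2.1) (hWp_int v.1 v.2.1)).sub (continuous_apply v).continuousOn
  · exact continuousOn_finsetSum _ fun β _ =>
      continuousOn_psiMean hWm_nonneg hWm_meas hC hA_meas hS_meas hS_nonneg hS_int
  · have hzu {s : ℝ} (hs : 0 ≤ s) : Function.update z u s ∈ nonnegV R T :=
      Function.forall_update_iff z (p := fun _ y => 0 ≤ y) |>.2 ⟨hs, fun w _ => hz w⟩
    change psiMean Wm C A _ v.2.2 (Function.update z u t) - Function.update z u t v ≤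
      psiMean Wm C A _ v.2.2 (Function.update z u t') - Function.update z u t' v
    rw [Function.update_of_ne huv.symm, Function.update_of_ne huv.symm]
    exact sub_le_sub_right (monotoneOn_psiMean hWm_nonneg hWm_meas hC hA_meas
      (hWp_meas v.1 v.2.1) (fun ω => hWp_nonneg ω v.1 v.2.1) (hWp_int v.1 v.2.1) (hzu ht)
      (hzu (ht.trans htt')) (update_le_update_iff'.2 htt')) _

/-- Each `f^{r,α,β}` and `g` is continuous on `[0,∞)^V`, and each `f^{r,α,β}` is
non-decreasing in every coordinate other than `(r,α,β)`. -/
theorem stmt_2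
    {Ω : Type*} [MeasureSpace Ω] [IsProbabilityMeasure (volume : Measure Ω)]
    {R T : ℕ} (hR : 0 < R) (hT : 0 < T)
    (Wm Wp : Ω → Fin R → Fin T → ℝ) (S : Ω → ℝ) (C : Ω → WithTop ℕ) (A : Ω → Fin T)
    (hWm_nonneg : ∀ ω r α, 0 ≤ Wm ω r α) (hWp_nonneg : ∀ ω r α, 0 ≤ Wp ω r α)
    (hS_nonneg : ∀ ω, 0 ≤ S ω)
    (hWm_meas : ∀ r α, Measurable fun ω => Wm ω r α)
    (hWp_meas : ∀ r α, Measurable fun ω => Wp ω r α)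
    (hS_meas : Measurable S) (hA_meas : Measurable A)
    (hC_meas : ∀ l : WithTop ℕ, MeasurableSet {ω | C ω = l})
    (hWm_int : ∀ r α, Integrable fun ω => Wm ω r α)
    (hWp_int : ∀ r α, Integrable fun ω => Wp ω r α)
    (hS_int : Integrable S)
    :
    (∀ v, ContinuousOn (fV Wm Wp C A v) (nonnegV R T)) ∧
    ContinuousOn (gV Wm S C A) (nonnegV R T) ∧
    (∀ v u : Fin R × Fin T × Fin T, u ≠ v → ∀ z ∈ nonnegV R T, ∀ t t' : ℝ,
      0 ≤ t → t ≤ t' →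
        fV Wm Wp C A v (Function.update z u t) ≤ fV Wm Wp C A v (Function.update z u t')) :=
  stmt_2_general Wm Wp S C A hWm_nonneg hWp_nonneg hS_nonneg hWm_meas hWp_meas hS_meas hA_meas
    hC_meas hWp_int hS_int
end

section
/- Let χ̄_n ∈ [0,∞)^M denote the smallest solution of n^{−1} Σ_{i=1}^n x_i ρ((ℓ_i + x_i·h(χ))/c_i) = χ and let χ̂_n denote the smallest solution of n^{−1} Σ_{i=1}^n x_i ρ̊((ℓ_i + x_i·h(χ))/c_i) = χ (both smallest solutions exist). Then χ̂_n ≤ n^{−1} lim_{k→∞} σ_(k) ≤ χ̄_n componentwise. -/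
/-! A sandwich by monotone iteration. The normalized iterates `σ_(k)/n` are the iterates from `0`
of the monotone map `F_ρ(χ) = n⁻¹ ∑ᵢ xᵢ ρ((ℓᵢ + xᵢ · h(χ))/cᵢ)`, so they increase and stay below
every fixed point of `F_ρ`, in particular below `χ̄_n`. Since `ρ̊ ≤ ρ`, the iterates of `F_ρ̊` stay
below those of `F_ρ`; they increase to a limit, which is a fixed point of `F_ρ̊` because `h` is
continuous and `ρ̊` is continuous along increasing sequences. Minimality of `χ̂_n` then bounds
`χ̂_n` by that limit, hence by `χ_n`. -/

open MeasureTheory Filter Set Topology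
open scoped ENNReal

/-- The fire-sales iteration `σ_(k)` (number of sold shares, not normalized by `n`):
`σ_(0) = 0` and `σ_(k+1)^m = ∑_i x_i^m ρ((ℓ_i + x_i · h(σ_(k)/n)) / c_i)`. -/
noncomputable def sigmaIter {M : ℕ} (ρ : ℝ → ℝ) (h : (Fin M → ℝ) → Fin M → ℝ)
    (n : ℕ) (x : Fin n → Fin M → ℝ) (c : Fin n → ℝ≥0∞) (ℓ : Fin n → ℝ) :
    ℕ → Fin M → ℝ
  | 0 => 0
  | k + 1 => fun m =>
      ∑ i, x i m *
        ρ ((ℓ i + ∑ m', x i m' * h (fun m'' => sigmaIter ρ h n x c ℓ k m'' / (n : ℝ)) m') /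
          (c i).toReal)

section Iterate

variable {α : Type*} [Preorder α] {f g : α → α} {s : Set α} {a : α}

theorem MonotoneOn.iterate_le_of_map_le (hf : MonotoneOn f s) (hs : MapsTo f s s) (ha : a ∈ s)
    {p : α} (hp : p ∈ s) (hap : a ≤ p) (hfp : f p ≤ p) (k : ℕ) : f^[k] a ≤ p := by
  induction k with
  | zero => exact hap
  | succ k ih =>
    rw [Function.iterate_succ_apply']
    exact (hf (hs.iterate k ha) hp ih).trans hfp

theorem MonotoneOn.monotone_iterate_of_le_map (hf : MonotoneOn f s) (hs : MapsTo f s s)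
    (ha : a ∈ s) (hfa : a ≤ f a) : Monotone fun k => f^[k] a := by
  refine monotone_nat_of_le_succ fun k => ?_
  induction k with
  | zero => exact hfa
  | succ k ih =>
    rw [Function.iterate_succ_apply', Function.iterate_succ_apply' f (k + 1)]
    exact hf (hs.iterate k ha) (hs.iterate (k + 1) ha) ih

theorem MonotoneOn.iterate_le_iterate_of_le (hg : MonotoneOn g s) (hfs : MapsTo f s s)
    (hgs : MapsTo g s s) (hfg : ∀ y ∈ s, f y ≤ g y) (ha : a ∈ s) (k : ℕ) :
    f^[k] a ≤ g^[k] a := by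
  induction k with
  | zero => exact le_rfl
  | succ k ih =>
    rw [Function.iterate_succ_apply', Function.iterate_succ_apply']
    exact (hfg _ (hfs.iterate k ha)).trans (hg (hfs.iterate k ha) (hgs.iterate k ha) ih)

end Iterate

def IsLeftModification (ρ ρc : ℝ → ℝ) : Prop :=
  ∀ u : ℝ, 0 ≤ u → Tendsto (fun ε => ρ ((1 - ε) * u)) (𝓝[>] 0) (𝓝 (ρc u))

namespace IsLeftModification

variable {ρ ρc : ℝ → ℝ}

theorem apply_le (hρc : IsLeftModification ρ ρc) (hρ : MonotoneOn ρ (Ici 0)) {u : ℝ}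
    (hu : 0 ≤ u) : ρc u ≤ ρ u := by
  refine le_of_tendsto (hρc u hu) ?_
  filter_upwards [Ioo_mem_nhdsGT one_pos] with ε hε
  exact hρ (by simp only [mem_Ici]; nlinarith [hε.1, hε.2]) hu (by nlinarith [hε.1, hε.2])

theorem le_apply_of_lt (hρc : IsLeftModification ρ ρc) (hρ : MonotoneOn ρ (Ici 0)) {w u : ℝ}
    (hw : 0 ≤ w) (hwu : w < u) : ρ w ≤ ρc u := by
  have hu : 0 < u := hw.trans_lt hwu
  refine ge_of_tendsto (hρc u hu.le) ?_
  filter_upwards [Ioo_mem_nhdsGT (div_pos (sub_pos.2 hwu) hu)] with ε hε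
  have hεu : ε * u < u - w := (lt_div_iff₀ hu).1 hε.2
  exact hρ hw (by simp only [mem_Ici]; nlinarith [hε.1]) (by nlinarith)

theorem monotoneOn (hρc : IsLeftModification ρ ρc) (hρ : MonotoneOn ρ (Ici 0)) :
    MonotoneOn ρc (Ici 0) := by
  intro u hu v _ huv
  rcases huv.eq_or_lt with rfl | hlt
  · exact le_rfl
  · exact (hρc.apply_le hρ hu).trans (hρc.le_apply_of_lt hρ hu hlt)

theorem mapsTo_Ici (hρc : IsLeftModification ρ ρc) (hρ : MapsTo ρ (Ici 0) (Ici 0)) :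
    MapsTo ρc (Ici 0) (Ici 0) := by
  intro u hu
  refine ge_of_tendsto (hρc u hu) ?_
  filter_upwards [Ioo_mem_nhdsGT one_pos] with ε hε
  exact hρ (by simp only [mem_Ici] at hu ⊢; nlinarith [hε.1, hε.2])

theorem tendsto_apply_of_monotone (hρc : IsLeftModification ρ ρc) (hρ : MonotoneOn ρ (Ici 0))
    {a : ℕ → ℝ} {A : ℝ} (ha : Monotone a) (ha₀ : ∀ k, 0 ≤ a k) (hA : Tendsto a atTop (𝓝 A)) :
    Tendsto (fun k => ρc (a k)) atTop (𝓝 (ρc A)) := by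
  have haA : ∀ k, a k ≤ A := ha.ge_of_tendsto hA
  refine tendsto_order.2 ⟨fun b hb => ?_, fun b hb => Eventually.of_forall fun k =>
    (hρc.monotoneOn hρ (ha₀ k) ((ha₀ k).trans (haA k)) (haA k)).trans_lt hb⟩
  rcases ((ha₀ 0).trans (haA 0)).eq_or_lt with rfl | hA₀
  · exact Eventually.of_forall fun k => by rwa [le_antisymm (haA k) (ha₀ k)]
  · obtain ⟨ε, hbε, hε⟩ :=
      (((hρc A hA₀.le).eventually (lt_mem_nhds hb)).and (Ioo_mem_nhdsGT one_pos)).exists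
    have hlt : (1 - ε) * A < A := by nlinarith [hε.1]
    filter_upwards [hA.eventually (lt_mem_nhds hlt)] with k hk
    exact hbε.trans_le (hρc.le_apply_of_lt hρ (by nlinarith [hε.2]) hk)

end IsLeftModification

section FireSale

variable {M n : ℕ} {h : (Fin M → ℝ) → Fin M → ℝ} {x : Fin n → Fin M → ℝ} {c : Fin n → ℝ≥0∞}
  {ℓ : Fin n → ℝ}

noncomputable def lossRatio (h : (Fin M → ℝ) → Fin M → ℝ) (x : Fin n → Fin M → ℝ)
    (c : Fin n → ℝ≥0∞) (ℓ : Fin n → ℝ) (i : Fin n) (χ : Fin M → ℝ) : ℝ :=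
  (ℓ i + ∑ m', x i m' * h χ m') / (c i).toReal

noncomputable def fireSaleMap (ρ : ℝ → ℝ) (h : (Fin M → ℝ) → Fin M → ℝ) (n : ℕ)
    (x : Fin n → Fin M → ℝ) (c : Fin n → ℝ≥0∞) (ℓ : Fin n → ℝ) (χ : Fin M → ℝ) : Fin M → ℝ :=
  fun m => (∑ i, x i m * ρ (lossRatio h x c ℓ i χ)) / n

theorem sigmaIter_div_eq_iterate (ρ : ℝ → ℝ) (k : ℕ) :
    (fun m => sigmaIter ρ h n x c ℓ k m / n) = (fireSaleMap ρ h n x c ℓ)^[k] 0 := by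
  induction k with
  | zero => ext m; simp [sigmaIter]
  | succ k ih => rw [Function.iterate_succ_apply', ← ih]; rfl

theorem lossRatio_nonneg (hx : 0 ≤ x) (hℓ : 0 ≤ ℓ) (hh₀ : MapsTo h (Ici 0) (Ici 0)) (i : Fin n)
    {χ : Fin M → ℝ} (hχ : 0 ≤ χ) : 0 ≤ lossRatio h x c ℓ i χ :=
  div_nonneg (add_nonneg (hℓ i) (Finset.sum_nonneg fun m' _ =>
    mul_nonneg (hx i m') (hh₀ (mem_Ici.2 hχ) m'))) ENNReal.toReal_nonneg

theorem lossRatio_monotoneOn (hx : 0 ≤ x) (hh : MonotoneOn h (Ici 0)) (i : Fin n) :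
    MonotoneOn (lossRatio h x c ℓ i) (Ici 0) := fun χ hχ χ' hχ' hle => by
  unfold lossRatio
  gcongr with m'
  exacts [hx i m', hh hχ hχ' hle m']

theorem fireSaleMap_mapsTo {ρ : ℝ → ℝ} (hρ : MapsTo ρ (Ici 0) (Ici 0)) (hx : 0 ≤ x) (hℓ : 0 ≤ ℓ)
    (hh₀ : MapsTo h (Ici 0) (Ici 0)) : MapsTo (fireSaleMap ρ h n x c ℓ) (Ici 0) (Ici 0) :=
  fun _ hχ m => div_nonneg (Finset.sum_nonneg fun i _ =>
    mul_nonneg (hx i m) (hρ (lossRatio_nonneg hx hℓ hh₀ i hχ))) n.cast_nonneg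

theorem fireSaleMap_monotoneOn {ρ : ℝ → ℝ} (hρ : MonotoneOn ρ (Ici 0)) (hx : 0 ≤ x) (hℓ : 0 ≤ ℓ)
    (hh₀ : MapsTo h (Ici 0) (Ici 0)) (hh : MonotoneOn h (Ici 0)) :
    MonotoneOn (fireSaleMap ρ h n x c ℓ) (Ici 0) := fun χ hχ χ' hχ' hle m => by
  unfold fireSaleMap
  gcongr with i
  exacts [hx i m, hρ (lossRatio_nonneg hx hℓ hh₀ i hχ) (lossRatio_nonneg hx hℓ hh₀ i hχ')
    (lossRatio_monotoneOn hx hh i hχ hχ' hle)]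

theorem fireSaleMap_le_fireSaleMap {ρ ρ' : ℝ → ℝ} (hρρ' : ∀ u ∈ Ici 0, ρ u ≤ ρ' u) (hx : 0 ≤ x)
    (hℓ : 0 ≤ ℓ) (hh₀ : MapsTo h (Ici 0) (Ici 0)) {χ : Fin M → ℝ} (hχ : 0 ≤ χ) :
    fireSaleMap ρ h n x c ℓ χ ≤ fireSaleMap ρ' h n x c ℓ χ := fun m => by
  unfold fireSaleMap
  gcongr with i
  exacts [hx i m, hρρ' _ (lossRatio_nonneg hx hℓ hh₀ i hχ)]

theorem tendsto_fireSaleMap_of_monotone {ρ : ℝ → ℝ}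
    (hρ : ∀ {a : ℕ → ℝ} {A : ℝ}, Monotone a → (∀ k, 0 ≤ a k) → Tendsto a atTop (𝓝 A) →
      Tendsto (fun k => ρ (a k)) atTop (𝓝 (ρ A)))
    (hx : 0 ≤ x) (hℓ : 0 ≤ ℓ) (hh₀ : MapsTo h (Ici 0) (Ici 0)) (hh : MonotoneOn h (Ici 0))
    (hh_cont : ContinuousOn h (Ici 0)) {u : ℕ → Fin M → ℝ} {L : Fin M → ℝ} (hu : Monotone u)
    (hu₀ : ∀ k, 0 ≤ u k) (hL : Tendsto u atTop (𝓝 L)) :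
    Tendsto (fun k => fireSaleMap ρ h n x c ℓ (u k)) atTop (𝓝 (fireSaleMap ρ h n x c ℓ L)) := by
  have hL₀ : L ∈ Ici 0 := isClosed_Ici.mem_of_tendsto hL (Eventually.of_forall hu₀)
  have hhL : Tendsto (fun k => h (u k)) atTop (𝓝 (h L)) :=
    (hh_cont L hL₀).tendsto.comp (tendsto_nhdsWithin_iff.2 ⟨hL, Eventually.of_forall hu₀⟩)
  have hloss (i : Fin n) :
      Tendsto (fun k => lossRatio h x c ℓ i (u k)) atTop (𝓝 (lossRatio h x c ℓ i L)) :=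
    ((tendsto_finsetSum _ fun m' _ =>
      (tendsto_pi_nhds.1 hhL m').const_mul _).const_add _).div_const _
  refine tendsto_pi_nhds.2 fun m => ((tendsto_finsetSum _ fun i _ => ?_).div_const _)
  refine (hρ (fun k k' hkk' => lossRatio_monotoneOn hx hh i (hu₀ k) (hu₀ k') (hu hkk'))
    (fun k => lossRatio_nonneg hx hℓ hh₀ i (hu₀ k)) (hloss i)).const_mul _

end FireSale

theorem stmt_11_general {M n : ℕ}
    (ρ : ℝ → ℝ) (hρ_mono : MonotoneOn ρ (Set.Ici 0))
    (hρ_mem : ∀ u ∈ Set.Ici (0:ℝ), ρ u ∈ Set.Icc (0:ℝ) 1)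
    (ρc : ℝ → ℝ)
    (hρc : ∀ u : ℝ, 0 ≤ u → Tendsto (fun ε => ρ ((1 - ε) * u)) (𝓝[>] 0) (𝓝 (ρc u)))
    (h : (Fin M → ℝ) → Fin M → ℝ)
    (hh_cont : ∀ m, ContinuousOn (fun χ => h χ m) {χ : Fin M → ℝ | ∀ m', 0 ≤ χ m'})
    (hh_mono : ∀ m (χ χ' : Fin M → ℝ), (∀ m', 0 ≤ χ m') → (∀ m', χ m' ≤ χ' m') → h χ m ≤ h χ' m)
    (hh_mem : ∀ m (χ : Fin M → ℝ), (∀ m', 0 ≤ χ m') → h χ m ∈ Set.Icc (0:ℝ) 1)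
    (x : Fin n → Fin M → ℝ) (hx : ∀ i m, 0 ≤ x i m)
    (c : Fin n → ℝ≥0∞)
    (ℓ : Fin n → ℝ) (hℓ : ∀ i, 0 ≤ ℓ i)
    (χbar : Fin M → ℝ) (hχbar_nonneg : ∀ m, 0 ≤ χbar m)
    (hχbar_sol : ∀ m,
      (∑ i, x i m * ρ ((ℓ i + ∑ m', x i m' * h χbar m') / (c i).toReal)) / (n : ℝ) = χbar m)
    (χhat : Fin M → ℝ)
    (hχhat_min : ∀ χ' : Fin M → ℝ, (∀ m, 0 ≤ χ' m) →
      (∀ m, (∑ i, x i m * ρc ((ℓ i + ∑ m', x i m' * h χ' m') / (c i).toReal)) / (n : ℝ) = χ' m) →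
      ∀ m, χhat m ≤ χ' m)
    (χn : Fin M → ℝ)
    (hχn : ∀ m, Tendsto (fun k => sigmaIter ρ h n x c ℓ k m / (n : ℝ)) atTop (𝓝 (χn m))) :
    ∀ m, χhat m ≤ χn m ∧ χn m ≤ χbar m := by
  have hmod : IsLeftModification ρ ρc := hρc
  have hh₀ : MapsTo h (Ici 0) (Ici 0) := fun χ hχ m => (hh_mem m χ hχ).1
  have hh : MonotoneOn h (Ici 0) := fun χ hχ χ' _ hle m => hh_mono m χ χ' hχ hle
  have hρ₀ : MapsTo ρ (Ici 0) (Ici 0) := fun u hu => (hρ_mem u hu).1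
  set F := fireSaleMap ρ h n x c ℓ
  set G := fireSaleMap ρc h n x c ℓ
  have hF : MonotoneOn F (Ici 0) := fireSaleMap_monotoneOn hρ_mono hx hℓ hh₀ hh
  have hFs : MapsTo F (Ici 0) (Ici 0) := fireSaleMap_mapsTo hρ₀ hx hℓ hh₀
  have hG : MonotoneOn G (Ici 0) := fireSaleMap_monotoneOn (hmod.monotoneOn hρ_mono) hx hℓ hh₀ hh
  have hGs : MapsTo G (Ici 0) (Ici 0) := fireSaleMap_mapsTo (hmod.mapsTo_Ici hρ₀) hx hℓ hh₀
  have hG₀ (k : ℕ) : G^[k] 0 ∈ Ici 0 := hGs.iterate k self_mem_Ici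
  have hF_lim : Tendsto (fun k => F^[k] 0) atTop (𝓝 χn) :=
    (tendsto_pi_nhds.2 hχn).congr fun k => sigmaIter_div_eq_iterate ρ k
  have hF_mono := hF.monotone_iterate_of_le_map hFs self_mem_Ici (hFs self_mem_Ici)
  have hGχn (k : ℕ) : G^[k] 0 ≤ χn :=
    (hF.iterate_le_iterate_of_le hGs hFs (fun _ hχ => fireSaleMap_le_fireSaleMap
      (fun _ hu => hmod.apply_le hρ_mono hu) hx hℓ hh₀ hχ) self_mem_Ici k).trans
      (hF_mono.ge_of_tendsto hF_lim k)
  have hG_mono := hG.monotone_iterate_of_le_map hGs self_mem_Ici (hGs self_mem_Ici)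
  have hG_lim : Tendsto (fun k => G^[k] 0) atTop (𝓝 (⨆ k, G^[k] 0)) :=
    tendsto_atTop_ciSup hG_mono ⟨χn, forall_mem_range.2 hGχn⟩
  have hG_fix : G (⨆ k, G^[k] 0) = ⨆ k, G^[k] 0 := by
    refine tendsto_nhds_unique ?_ ((tendsto_add_atTop_iff_nat 1).2 hG_lim)
    simpa only [Function.iterate_succ_apply'] using
      tendsto_fireSaleMap_of_monotone (hmod.tendsto_apply_of_monotone hρ_mono) hx hℓ hh₀ hh
        (continuousOn_pi.2 hh_cont) hG_mono hG₀ hG_lim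
  have hupper : χn ≤ χbar := le_of_tendsto' hF_lim
    (hF.iterate_le_of_map_le hFs self_mem_Ici hχbar_nonneg hχbar_nonneg (funext hχbar_sol).le)
  have hlower : χhat ≤ χn := fun m =>
    (hχhat_min _ (isClosed_Ici.mem_of_tendsto hG_lim (Eventually.of_forall hG₀))
      (congrFun hG_fix) m).trans (ciSup_le hGχn m)
  exact fun m => ⟨hlower m, hupper m⟩

/-- For a right-continuous sale function `ρ` with left-continuous modification `ρ̊`, the limit of
the fire-sales iteration is sandwiched between the smallest solution `χ̂_n` of the `ρ̊`-fixed-point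
equation and the smallest solution `χ̄_n` of the `ρ`-fixed-point equation. -/
theorem stmt_11 {M n : ℕ} (hn : 0 < n)
    (ρ : ℝ → ℝ) (hρ_mono : MonotoneOn ρ (Set.Ici 0))
    (hρ_rc : ∀ u ∈ Set.Ici (0:ℝ), ContinuousWithinAt ρ (Set.Ici u) u)
    (hρ_zero : ρ 0 = 0) (hρ_mem : ∀ u ∈ Set.Ici (0:ℝ), ρ u ∈ Set.Icc (0:ℝ) 1)
    (hρ_plateau : ∀ u : ℝ, 1 ≤ u → ρ u = ρ 1)
    (ρc : ℝ → ℝ)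
    (hρc : ∀ u : ℝ, 0 ≤ u → Tendsto (fun ε => ρ ((1 - ε) * u)) (𝓝[>] 0) (𝓝 (ρc u)))
    (h : (Fin M → ℝ) → Fin M → ℝ)
    (hh_cont : ∀ m, ContinuousOn (fun χ => h χ m) {χ : Fin M → ℝ | ∀ m', 0 ≤ χ m'})
    (hh_mono : ∀ m (χ χ' : Fin M → ℝ), (∀ m', 0 ≤ χ m') → (∀ m', χ m' ≤ χ' m') → h χ m ≤ h χ' m)
    (hh_mem : ∀ m (χ : Fin M → ℝ), (∀ m', 0 ≤ χ m') → h χ m ∈ Set.Icc (0:ℝ) 1)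
    (x : Fin n → Fin M → ℝ) (hx : ∀ i m, 0 ≤ x i m)
    (c : Fin n → ℝ≥0∞) (hc : ∀ i, 0 < c i)
    (ℓ : Fin n → ℝ) (hℓ : ∀ i, 0 ≤ ℓ i)
    (χbar : Fin M → ℝ) (hχbar_nonneg : ∀ m, 0 ≤ χbar m)
    (hχbar_sol : ∀ m,
      (∑ i, x i m * ρ ((ℓ i + ∑ m', x i m' * h χbar m') / (c i).toReal)) / (n : ℝ) = χbar m)
    (hχbar_min : ∀ χ' : Fin M → ℝ, (∀ m, 0 ≤ χ' m) →
      (∀ m, (∑ i, x i m * ρ ((ℓ i + ∑ m', x i m' * h χ' m') / (c i).toReal)) / (n : ℝ) = χ' m) →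
      ∀ m, χbar m ≤ χ' m)
    (χhat : Fin M → ℝ) (hχhat_nonneg : ∀ m, 0 ≤ χhat m)
    (hχhat_sol : ∀ m,
      (∑ i, x i m * ρc ((ℓ i + ∑ m', x i m' * h χhat m') / (c i).toReal)) / (n : ℝ) = χhat m)
    (hχhat_min : ∀ χ' : Fin M → ℝ, (∀ m, 0 ≤ χ' m) →
      (∀ m, (∑ i, x i m * ρc ((ℓ i + ∑ m', x i m' * h χ' m') / (c i).toReal)) / (n : ℝ) = χ' m) →
      ∀ m, χhat m ≤ χ' m)
    (χn : Fin M → ℝ)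
    (hχn : ∀ m, Tendsto (fun k => sigmaIter ρ h n x c ℓ k m / (n : ℝ)) atTop (𝓝 (χn m))) :
    ∀ m, χhat m ≤ χn m ∧ χn m ≤ χbar m :=
  stmt_11_general ρ hρ_mono hρ_mem ρc hρc h hh_cont hh_mono hh_mem x hx c ℓ hℓ χbar hχbar_nonneg
    hχbar_sol χhat hχhat_min χn hχn
end

section
/- There exists a smallest joint root χ̂ ∈ [0,∞)^M of the functions f̊^m, m = 1,…,M (i.e., f̊^m(χ̂) = 0 for all m and χ̂ ≤ χ̄ componentwise for every joint root χ̄), and χ̂ ∈ P̊₀. Moreover, χ* ∈ P₀ and χ* is a joint root of the functions f^m, m = 1,…,M. -/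
open MeasureTheory Filter Set Topology
open scoped ENNReal

/-- `f^m(χ) = E[X^m ρ((L + X·h(χ))/C)] − χ^m`. -/
noncomputable def fFS {Ω : Type*} [MeasureSpace Ω] {M : ℕ} (ρ : ℝ → ℝ)
    (h : (Fin M → ℝ) → Fin M → ℝ) (X : Ω → Fin M → ℝ) (C : Ω → ℝ≥0∞) (L : Ω → ℝ)
    (m : Fin M) (χ : Fin M → ℝ) : ℝ :=
  (∫ ω, X ω m * ρ ((L ω + ∑ m', X ω m' * h χ m') / (C ω).toReal)) - χ m

/-- `P = ∩_m {χ ∈ [0,∞)^M : f^m(χ) ≥ 0}`. -/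
noncomputable def PsetFS {Ω : Type*} [MeasureSpace Ω] {M : ℕ} (ρ : ℝ → ℝ)
    (h : (Fin M → ℝ) → Fin M → ℝ) (X : Ω → Fin M → ℝ) (C : Ω → ℝ≥0∞) (L : Ω → ℝ) :
    Set (Fin M → ℝ) :=
  {χ | (∀ m, 0 ≤ χ m) ∧ ∀ m, 0 ≤ fFS ρ h X C L m χ}

/-- `P₀`, the largest connected subset of `P` containing `0`. -/
noncomputable def P0FS {Ω : Type*} [MeasureSpace Ω] {M : ℕ} (ρ : ℝ → ℝ)
    (h : (Fin M → ℝ) → Fin M → ℝ) (X : Ω → Fin M → ℝ) (C : Ω → ℝ≥0∞) (L : Ω → ℝ) :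
    Set (Fin M → ℝ) :=
  connectedComponentIn (PsetFS ρ h X C L) 0

/-- `χ*`, defined by `(χ*)^m = sup_{χ ∈ P₀} χ^m`. -/
noncomputable def chiStarFS {Ω : Type*} [MeasureSpace Ω] {M : ℕ} (ρ : ℝ → ℝ)
    (h : (Fin M → ℝ) → Fin M → ℝ) (X : Ω → Fin M → ℝ) (C : Ω → ℝ≥0∞) (L : Ω → ℝ) :
    Fin M → ℝ :=
  fun m => sSup ((fun χ => χ m) '' P0FS ρ h X C L)

/-!
Write `Φ_r(χ)^m = E[X^m r((L + X·h(χ))/C)]`, so that `f^m = Φ_ρ^m - id` and `P` is the set of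
nonnegative post-fixed points `χ ≤ Φ_ρ(χ)`. For monotone `r` with values in `[0,1]`, `Φ_r` is
monotone on the orthant and bounded by `E[X]`.

For `χ̂`, the Kleene iterates `Φ̊^k(0)` increase to a limit, which is a fixed point because `ρ̊` is
left continuous (dominated convergence), and lies below every nonnegative fixed point by induction.
The boxes `[Φ̊^k(0), Φ̊^(k+1)(0)] ⊆ P̊` form a connected chain from `0` accumulating at the limit,
so the limit is in `P̊₀`.

For `χ*`, monotonicity makes `P₀` closed under coordinatewise `max`, so `χ* = sup P₀` is a limit of
points of `P₀`. Since `χ* ∈ P` and `P₀` is a connected component, `χ* ∈ P₀`; the connected box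
`[χ*, Φ(χ*)] ⊆ P` then puts `Φ(χ*)` in `P₀`, whence `Φ(χ*) ≤ χ*`.
-/

section PostfixedPoints

variable {α : Type*} [Zero α] [Preorder α] {Φ : α → α}

def nonnegPostfixedPoints (Φ : α → α) : Set α := {x | 0 ≤ x ∧ x ≤ Φ x}

lemma Icc_apply_subset_nonnegPostfixedPoints (hΦ : MonotoneOn Φ (Ici 0)) {x : α}
    (hx : x ∈ nonnegPostfixedPoints Φ) : Icc x (Φ x) ⊆ nonnegPostfixedPoints Φ :=
  fun _ hy => ⟨hx.1.trans hy.1, hy.2.trans (hΦ hx.1 (hx.1.trans hy.1) hy.1)⟩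

lemma iterate_zero_mem_nonnegPostfixedPoints (hΦ : MonotoneOn Φ (Ici 0)) (h0 : 0 ≤ Φ 0) :
    ∀ k, Φ^[k] 0 ∈ nonnegPostfixedPoints Φ
  | 0 => ⟨le_rfl, h0⟩
  | k + 1 => by
    obtain ⟨hk0, hk⟩ := iterate_zero_mem_nonnegPostfixedPoints hΦ h0 k
    rw [Function.iterate_succ_apply']
    exact Icc_apply_subset_nonnegPostfixedPoints hΦ ⟨hk0, hk⟩ ⟨hk, le_rfl⟩

lemma monotone_iterate_zero (hΦ : MonotoneOn Φ (Ici 0)) (h0 : 0 ≤ Φ 0) :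
    Monotone fun k => Φ^[k] 0 :=
  monotone_nat_of_le_succ fun k => by
    rw [Function.iterate_succ_apply']
    exact (iterate_zero_mem_nonnegPostfixedPoints hΦ h0 k).2

lemma iterate_zero_le_of_apply_le (hΦ : MonotoneOn Φ (Ici 0)) (h0 : 0 ≤ Φ 0) {x : α}
    (hx0 : 0 ≤ x) (hx : Φ x ≤ x) : ∀ k, Φ^[k] 0 ≤ x
  | 0 => hx0
  | k + 1 => by
    rw [Function.iterate_succ_apply']
    exact (hΦ (iterate_zero_mem_nonnegPostfixedPoints hΦ h0 k).1 hx0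
      (iterate_zero_le_of_apply_le hΦ h0 hx0 hx k)).trans hx

lemma bddAbove_nonnegPostfixedPoints (hbdd : BddAbove (Φ '' Ici 0)) :
    BddAbove (nonnegPostfixedPoints Φ) :=
  let ⟨B, hB⟩ := hbdd
  ⟨B, fun _ hx => hx.2.trans (hB (mem_image_of_mem Φ hx.1))⟩

end PostfixedPoints

lemma sup_mem_nonnegPostfixedPoints {α : Type*} [Zero α] [Lattice α] {Φ : α → α}
    (hΦ : MonotoneOn Φ (Ici 0)) {x y : α} (hx : x ∈ nonnegPostfixedPoints Φ)
    (hy : y ∈ nonnegPostfixedPoints Φ) : x ⊔ y ∈ nonnegPostfixedPoints Φ := by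
  have hxy : 0 ≤ x ⊔ y := le_sup_of_le_left hx.1
  exact ⟨hxy, sup_le (hx.2.trans (hΦ hx.1 hxy le_sup_left))
    (hy.2.trans (hΦ hy.1 hxy le_sup_right))⟩

section ConnectedComponentIn

variable {α : Type*} [TopologicalSpace α] {F s : Set α} {x y : α}

lemma IsPreconnected.subset_connectedComponentIn_of_mem (hs : IsPreconnected s) (hsF : s ⊆ F)
    (hys : y ∈ s) (hy : y ∈ _root_.connectedComponentIn F x) :
    s ⊆ _root_.connectedComponentIn F x :=
  connectedComponentIn_eq hy ▸ hs.subset_connectedComponentIn hys hsF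

lemma mem_connectedComponentIn_of_mem_closure (hyF : y ∈ F)
    (hy : y ∈ closure (connectedComponentIn F x)) : y ∈ connectedComponentIn F x := by
  obtain ⟨z, hz⟩ : (connectedComponentIn F x).Nonempty := closure_nonempty_iff.1 ⟨y, hy⟩
  have hconn : IsPreconnected (insert y (connectedComponentIn F x)) :=
    isPreconnected_connectedComponentIn.subset_closure (subset_insert _ _)
      (insert_subset hy subset_closure)
  exact hconn.subset_connectedComponentIn_of_mem
    (insert_subset hyF (connectedComponentIn_subset F x)) (mem_insert_of_mem y hz) hz
    (mem_insert y _)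

end ConnectedComponentIn

lemma DirectedOn.isLUB_mem_closure {α : Type*} [Preorder α] [TopologicalSpace α]
    [SupConvergenceClass α] {s : Set α} {a : α} (hs : DirectedOn (· ≤ ·) s) (hne : s.Nonempty)
    (ha : IsLUB s a) : a ∈ closure s := by
  have : Nonempty s := hne.to_subtype
  have : IsDirectedOrder s := ⟨fun x y => by
    obtain ⟨z, hz, hxz, hyz⟩ := hs x x.2 y y.2
    exact ⟨⟨z, hz⟩, hxz, hyz⟩⟩
  exact mem_closure_of_tendsto (SupConvergenceClass.tendsto_coe_atTop_isLUB a s ha)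
    (Eventually.of_forall fun x => x.2)

section Orthant

variable {ι : Type*} {Φ : (ι → ℝ) → ι → ℝ}

lemma sup_mem_connectedComponentIn_nonnegPostfixedPoints (hΦ : MonotoneOn Φ (Ici 0))
    {x y : ι → ℝ} (hx : x ∈ connectedComponentIn (nonnegPostfixedPoints Φ) 0)
    (hy : y ∈ connectedComponentIn (nonnegPostfixedPoints Φ) 0) :
    x ⊔ y ∈ connectedComponentIn (nonnegPostfixedPoints Φ) 0 := by
  set C₀ := connectedComponentIn (nonnegPostfixedPoints Φ) 0
  have hC₀ : C₀ ⊆ nonnegPostfixedPoints Φ := connectedComponentIn_subset _ _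
  have h0 : (0 : ι → ℝ) ∈ C₀ :=
    mem_connectedComponentIn (connectedComponentIn_nonempty_iff.1 ⟨x, hx⟩)
  have hcont : Continuous fun z : ι → ℝ => x ⊔ z :=
    continuous_pi fun i => continuous_const.max (continuous_apply i)
  have himg : (fun z => x ⊔ z) '' C₀ ⊆ C₀ :=
    IsPreconnected.subset_connectedComponentIn_of_mem
      (isPreconnected_connectedComponentIn.image _ hcont.continuousOn)
      (image_subset_iff.2 fun z hz => sup_mem_nonnegPostfixedPoints hΦ (hC₀ hx) (hC₀ hz))
      ⟨0, h0, sup_eq_left.2 (hC₀ hx).1⟩ hx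
  exact himg ⟨y, hy, rfl⟩

theorem csSup_connectedComponentIn_mem_and_isFixedPt (hΦ : MonotoneOn Φ (Ici 0))
    (h0 : 0 ≤ Φ 0) (hbdd : BddAbove (Φ '' Ici 0)) :
    sSup (connectedComponentIn (nonnegPostfixedPoints Φ) 0) ∈
        connectedComponentIn (nonnegPostfixedPoints Φ) 0 ∧
      Φ (sSup (connectedComponentIn (nonnegPostfixedPoints Φ) 0)) =
        sSup (connectedComponentIn (nonnegPostfixedPoints Φ) 0) := by
  set C₀ := connectedComponentIn (nonnegPostfixedPoints Φ) 0
  have hC₀ : C₀ ⊆ nonnegPostfixedPoints Φ := connectedComponentIn_subset _ _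
  have h0C₀ : (0 : ι → ℝ) ∈ C₀ := mem_connectedComponentIn ⟨le_rfl, h0⟩
  set a := sSup C₀
  have ha : IsLUB C₀ a :=
    isLUB_csSup ⟨0, h0C₀⟩ ((bddAbove_nonnegPostfixedPoints hbdd).mono hC₀)
  have ha0 : 0 ≤ a := ha.1 h0C₀
  have haP : a ∈ nonnegPostfixedPoints Φ :=
    ⟨ha0, ha.2 fun x hx => (hC₀ hx).2.trans (hΦ (hC₀ hx).1 ha0 (ha.1 hx))⟩
  have hdir : DirectedOn (· ≤ ·) C₀ := fun x hx y hy =>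
    ⟨x ⊔ y, sup_mem_connectedComponentIn_nonnegPostfixedPoints hΦ hx hy, le_sup_left, le_sup_right⟩
  have haC₀ : a ∈ C₀ :=
    mem_connectedComponentIn_of_mem_closure haP (hdir.isLUB_mem_closure ⟨0, h0C₀⟩ ha)
  have hΦa : Φ a ∈ C₀ := (convex_Icc a (Φ a)).isPreconnected.subset_connectedComponentIn_of_mem
    (Icc_apply_subset_nonnegPostfixedPoints hΦ haP) ⟨le_rfl, haP.2⟩ haC₀ ⟨haP.2, le_rfl⟩
  exact ⟨haC₀, le_antisymm (ha.1 hΦa) haP.2⟩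

theorem exists_least_fixedPt_mem_connectedComponentIn (hΦ : MonotoneOn Φ (Ici 0))
    (h0 : 0 ≤ Φ 0) (hbdd : BddAbove (Φ '' Ici 0))
    (hcont : ∀ u : ℕ → ι → ℝ, Monotone u → 0 ≤ u 0 → ∀ x, Tendsto u atTop (𝓝 x) →
      Tendsto (Φ ∘ u) atTop (𝓝 (Φ x))) :
    ∃ a, 0 ≤ a ∧ Φ a = a ∧ (∀ x, 0 ≤ x → Φ x ≤ x → a ≤ x) ∧
      a ∈ connectedComponentIn (nonnegPostfixedPoints Φ) 0 := by
  set u : ℕ → ι → ℝ := fun k => Φ^[k] 0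
  have hu_mono : Monotone u := monotone_iterate_zero hΦ h0
  have hu_mem := iterate_zero_mem_nonnegPostfixedPoints hΦ h0
  have hu_succ (k : ℕ) : u (k + 1) = Φ (u k) := Function.iterate_succ_apply' Φ k 0
  have hu_bdd : BddAbove (range u) := by
    obtain ⟨B, hB⟩ := hbdd
    refine ⟨B, forall_mem_range.2 fun k => (hu_mono k.le_succ).trans ?_⟩
    rw [hu_succ]
    exact hB (mem_image_of_mem Φ (hu_mem k).1)
  have hlim : Tendsto u atTop (𝓝 (⨆ k, u k)) := tendsto_atTop_ciSup hu_mono hu_bdd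
  have ha0 : 0 ≤ ⨆ k, u k := le_ciSup hu_bdd 0
  have hfix : Φ (⨆ k, u k) = ⨆ k, u k := by
    refine tendsto_nhds_unique (hcont u hu_mono le_rfl _ hlim) ?_
    simpa only [Function.comp_def, hu_succ] using hlim.comp (tendsto_add_atTop_nat 1)
  refine ⟨⨆ k, u k, ha0, hfix,
    fun x hx0 hx => ciSup_le (iterate_zero_le_of_apply_le hΦ h0 hx0 hx),
    mem_connectedComponentIn_of_mem_closure ⟨ha0, hfix.ge⟩ ?_⟩
  set chain := ⋃ k, Icc (u k) (u (k + 1))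
  have hchain : chain ⊆ connectedComponentIn (nonnegPostfixedPoints Φ) 0 := by
    refine IsPreconnected.subset_connectedComponentIn ?_ (mem_iUnion_of_mem 0 ⟨le_rfl, h0⟩) ?_
    · exact IsPreconnected.iUnion_of_chain (fun k => (convex_Icc _ _).isPreconnected)
        fun k => ⟨u (k + 1), ⟨hu_mono k.le_succ, le_rfl⟩, le_rfl, hu_mono (k + 1).le_succ⟩
    · refine iUnion_subset fun k => ?_
      rw [hu_succ]
      exact Icc_apply_subset_nonnegPostfixedPoints hΦ (hu_mem k)
  exact closure_mono hchain <| mem_closure_of_tendsto hlim <|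
    Eventually.of_forall fun k => mem_iUnion_of_mem k ⟨le_rfl, hu_mono k.le_succ⟩

end Orthant

def IsLeftContinuousModification (ρ ρc : ℝ → ℝ) : Prop :=
  ∀ u : ℝ, 0 ≤ u → Tendsto (fun ε => ρ ((1 - ε) * u)) (𝓝[>] 0) (𝓝 (ρc u))

namespace IsLeftContinuousModification

variable {ρ ρc : ℝ → ℝ}

lemma mapsTo (hρc : IsLeftContinuousModification ρ ρc) {s : Set ℝ} (hs : IsClosed s)
    (hρ : MapsTo ρ (Ici 0) s) : MapsTo ρc (Ici 0) s := fun u hu => by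
  refine hs.mem_of_tendsto (hρc u hu) ?_
  filter_upwards [Ioo_mem_nhdsGT zero_lt_one] with ε hε
  exact hρ (mul_nonneg (sub_nonneg.2 hε.2.le) hu)

lemma monotoneOn (hρc : IsLeftContinuousModification ρ ρc) (hρ : MonotoneOn ρ (Ici 0)) :
    MonotoneOn ρc (Ici 0) := fun u hu v hv huv => by
  refine le_of_tendsto_of_tendsto (hρc u hu) (hρc v hv) ?_
  filter_upwards [Ioo_mem_nhdsGT zero_lt_one] with ε hε
  have hε' : 0 ≤ 1 - ε := by linarith [hε.2]
  exact hρ (mul_nonneg hε' hu) (mul_nonneg hε' (hu.trans huv)) (mul_le_mul_of_nonneg_left huv hε')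

lemma apply_le_of_lt (hρc : IsLeftContinuousModification ρ ρc) (hρ : MonotoneOn ρ (Ici 0))
    {v u : ℝ} (hv : 0 ≤ v) (hvu : v < u) : ρ v ≤ ρc u := by
  have hscale : Tendsto (fun ε : ℝ => (1 - ε) * u) (𝓝[>] 0) (𝓝 u) := by
    have : Continuous fun ε : ℝ => (1 - ε) * u := by fun_prop
    simpa using (this.tendsto 0).mono_left nhdsWithin_le_nhds
  refine ge_of_tendsto (hρc u (hv.trans hvu.le)) ?_
  filter_upwards [hscale.eventually (eventually_gt_nhds hvu)] with ε hε
  exact hρ hv (hv.trans hε.le) hε.le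

lemma continuousWithinAt_Icc (hρc : IsLeftContinuousModification ρ ρc)
    (hρ : MonotoneOn ρ (Ici 0)) {u : ℝ} (hu : 0 ≤ u) : ContinuousWithinAt ρc (Icc 0 u) u := by
  rcases hu.eq_or_lt with rfl | hu
  · simp [continuousWithinAt_singleton]
  refine tendsto_order.2 ⟨fun c hc => ?_, fun c hc => ?_⟩
  · obtain ⟨ε, hcε, hε⟩ := (((hρc u hu.le).eventually (eventually_gt_nhds hc)).and
      (Ioo_mem_nhdsGT zero_lt_one)).exists
    have hlt : (1 - ε) * u < u := by nlinarith [hε.1]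
    filter_upwards [nhdsWithin_le_nhds (eventually_gt_nhds hlt)] with v hv
    exact hcε.trans_le (hρc.apply_le_of_lt hρ (mul_nonneg (by linarith [hε.2]) hu.le) hv)
  · filter_upwards [self_mem_nhdsWithin] with v hv
    exact (hρc.monotoneOn hρ hv.1 hu.le hv.2).trans_lt hc

end IsLeftContinuousModification

section RelLoss

variable {Ω : Type*} {M : ℕ} {r : ℝ → ℝ} {h : (Fin M → ℝ) → Fin M → ℝ} {X : Ω → Fin M → ℝ}
  {C : Ω → ℝ≥0∞} {L : Ω → ℝ}

variable (h X C L) in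
/-- `C ω = ∞` has `toReal = 0`, and `x / 0 = 0` realises the convention `a/∞ = 0`. -/
noncomputable def relLoss (χ : Fin M → ℝ) (ω : Ω) : ℝ :=
  (L ω + ∑ m', X ω m' * h χ m') / (C ω).toReal

lemma relLoss_nonneg (hX : ∀ ω m, 0 ≤ X ω m) (hL : ∀ ω, 0 ≤ L ω) {χ : Fin M → ℝ} (hχ : 0 ≤ h χ)
    (ω : Ω) : 0 ≤ relLoss h X C L χ ω :=
  div_nonneg (add_nonneg (hL ω) (Finset.sum_nonneg fun m _ => mul_nonneg (hX ω m) (hχ m)))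
    ENNReal.toReal_nonneg

lemma relLoss_mono (hX : ∀ ω m, 0 ≤ X ω m) {χ χ' : Fin M → ℝ} (hχ : h χ ≤ h χ') (ω : Ω) :
    relLoss h X C L χ ω ≤ relLoss h X C L χ' ω := by
  unfold relLoss
  gcongr with m
  exacts [hX ω m, hχ m]

lemma measurable_relLoss [MeasurableSpace Ω] (hX : ∀ m, Measurable fun ω => X ω m)
    (hC : Measurable C) (hL : Measurable L) (χ : Fin M → ℝ) : Measurable (relLoss h X C L χ) :=
  (hL.add (Finset.measurable_sum _ fun m _ => (hX m).mul_const _)).div hC.ennreal_toReal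

lemma continuousOn_relLoss (hh : ContinuousOn h (Ici 0)) (ω : Ω) :
    ContinuousOn (fun χ => relLoss h X C L χ ω) (Ici 0) :=
  (continuousOn_const.add (continuousOn_finsetSum _ fun m _ =>
    continuousOn_const.mul ((continuous_apply m).comp_continuousOn hh))).div_const _

lemma mul_comp_relLoss_mem_Icc (hr : MapsTo r (Ici 0) (Icc 0 1)) (hX : ∀ ω m, 0 ≤ X ω m)
    (hL : ∀ ω, 0 ≤ L ω) {χ : Fin M → ℝ} (hχ : 0 ≤ h χ) (ω : Ω) (m : Fin M) :
    X ω m * r (relLoss h X C L χ ω) ∈ Icc 0 (X ω m) := by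
  obtain ⟨h0, h1⟩ := hr (relLoss_nonneg hX hL hχ ω)
  exact ⟨mul_nonneg (hX ω m) h0, mul_le_of_le_one_right (hX ω m) h1⟩

end RelLoss

lemma measurable_comp_of_monotoneOn_Ici {α : Type*} [MeasurableSpace α] {r : ℝ → ℝ}
    (hr : MonotoneOn r (Ici 0)) {g : α → ℝ} (hg : Measurable g) (hg0 : ∀ a, 0 ≤ g a) :
    Measurable fun a => r (g a) :=
  (show Monotone fun t : Ici (0 : ℝ) => r t from fun s t hst => hr s.2 t.2 hst).measurable.comp
    (hg.subtype_mk (h := hg0))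

section SalesMap

variable {Ω : Type*} [MeasureSpace Ω] {M : ℕ} {r : ℝ → ℝ} {h : (Fin M → ℝ) → Fin M → ℝ}
  {X : Ω → Fin M → ℝ} {C : Ω → ℝ≥0∞} {L : Ω → ℝ}

variable (r h X C L) in
noncomputable def salesMap (χ : Fin M → ℝ) : Fin M → ℝ :=
  fun m => ∫ ω, X ω m * r (relLoss h X C L χ ω)

lemma fFS_eq_salesMap_sub (m : Fin M) (χ : Fin M → ℝ) :
    fFS r h X C L m χ = salesMap r h X C L χ m - χ m := rfl

lemma PsetFS_eq_nonnegPostfixedPoints :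
    PsetFS r h X C L = nonnegPostfixedPoints (salesMap r h X C L) := by
  ext χ
  simp only [PsetFS, nonnegPostfixedPoints, fFS_eq_salesMap_sub, sub_nonneg, Pi.le_def]
  rfl

lemma P0FS_eq_connectedComponentIn :
    P0FS r h X C L = connectedComponentIn (nonnegPostfixedPoints (salesMap r h X C L)) 0 := by
  rw [P0FS, PsetFS_eq_nonnegPostfixedPoints]

lemma chiStarFS_eq_sSup : chiStarFS r h X C L = sSup (P0FS r h X C L) := by
  ext m
  rw [chiStarFS, sSup_apply_eq_sSup_image]

lemma forall_fFS_eq_zero_iff {χ : Fin M → ℝ} :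
    (∀ m, fFS r h X C L m χ = 0) ↔ salesMap r h X C L χ = χ := by
  simp only [fFS_eq_salesMap_sub, sub_eq_zero, funext_iff]

lemma integrable_mul_comp_relLoss (hr_mono : MonotoneOn r (Ici 0))
    (hr_mem : MapsTo r (Ici 0) (Icc 0 1)) (hX : ∀ ω m, 0 ≤ X ω m) (hL : ∀ ω, 0 ≤ L ω)
    (hX_meas : ∀ m, Measurable fun ω => X ω m) (hC_meas : Measurable C) (hL_meas : Measurable L)
    (hX_int : ∀ m, Integrable fun ω => X ω m) {χ : Fin M → ℝ} (hχ : 0 ≤ h χ) (m : Fin M) :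
    Integrable fun ω => X ω m * r (relLoss h X C L χ ω) := by
  refine (hX_int m).mul_bdd (c := 1) (measurable_comp_of_monotoneOn_Ici hr_mono
    (measurable_relLoss hX_meas hC_meas hL_meas χ) (relLoss_nonneg hX hL hχ)).aestronglyMeasurable
    (ae_of_all _ fun ω => ?_)
  obtain ⟨h0, h1⟩ := hr_mem (relLoss_nonneg hX hL hχ ω)
  rwa [Real.norm_of_nonneg h0]

lemma salesMap_nonneg (hr : MapsTo r (Ici 0) (Icc 0 1)) (hX : ∀ ω m, 0 ≤ X ω m)
    (hL : ∀ ω, 0 ≤ L ω) {χ : Fin M → ℝ} (hχ : 0 ≤ h χ) : 0 ≤ salesMap r h X C L χ := fun m =>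
  integral_nonneg fun ω => (mul_comp_relLoss_mem_Icc hr hX hL hχ ω m).1

lemma bddAbove_image_salesMap (hr_mono : MonotoneOn r (Ici 0))
    (hr_mem : MapsTo r (Ici 0) (Icc 0 1)) (hh_nonneg : ∀ χ, 0 ≤ χ → 0 ≤ h χ)
    (hX : ∀ ω m, 0 ≤ X ω m) (hL : ∀ ω, 0 ≤ L ω) (hX_meas : ∀ m, Measurable fun ω => X ω m)
    (hC_meas : Measurable C) (hL_meas : Measurable L) (hX_int : ∀ m, Integrable fun ω => X ω m) :
    BddAbove (salesMap r h X C L '' Ici 0) :=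
  ⟨fun m => ∫ ω, X ω m, forall_mem_image.2 fun χ hχ m =>
    integral_mono (integrable_mul_comp_relLoss hr_mono hr_mem hX hL hX_meas hC_meas hL_meas hX_int
      (hh_nonneg χ hχ) m) (hX_int m) fun ω => (mul_comp_relLoss_mem_Icc hr_mem hX hL
        (hh_nonneg χ hχ) ω m).2⟩

lemma monotoneOn_salesMap (hr_mono : MonotoneOn r (Ici 0)) (hr_mem : MapsTo r (Ici 0) (Icc 0 1))
    (hh_mono : MonotoneOn h (Ici 0)) (hh_nonneg : ∀ χ, 0 ≤ χ → 0 ≤ h χ) (hX : ∀ ω m, 0 ≤ X ω m)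
    (hL : ∀ ω, 0 ≤ L ω) (hX_meas : ∀ m, Measurable fun ω => X ω m) (hC_meas : Measurable C)
    (hL_meas : Measurable L) (hX_int : ∀ m, Integrable fun ω => X ω m) :
    MonotoneOn (salesMap r h X C L) (Ici 0) := fun χ hχ χ' hχ' hle m => by
  have hint {ξ : Fin M → ℝ} (hξ : 0 ≤ ξ) := integrable_mul_comp_relLoss (C := C) hr_mono hr_mem hX
    hL hX_meas hC_meas hL_meas hX_int (hh_nonneg ξ hξ) m
  refine integral_mono (hint hχ) (hint hχ') fun ω => ?_
  exact mul_le_mul_of_nonneg_left (hr_mono (relLoss_nonneg hX hL (hh_nonneg χ hχ) ω)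
    (relLoss_nonneg hX hL (hh_nonneg χ' hχ') ω) (relLoss_mono hX (hh_mono hχ hχ' hle) ω)) (hX ω m)

lemma tendsto_salesMap_of_monotone (hr_mono : MonotoneOn r (Ici 0))
    (hr_mem : MapsTo r (Ici 0) (Icc 0 1)) (hr_cont : ∀ u, 0 ≤ u → ContinuousWithinAt r (Icc 0 u) u)
    (hh_mono : MonotoneOn h (Ici 0)) (hh_nonneg : ∀ χ, 0 ≤ χ → 0 ≤ h χ)
    (hh_cont : ContinuousOn h (Ici 0)) (hX : ∀ ω m, 0 ≤ X ω m) (hL : ∀ ω, 0 ≤ L ω)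
    (hX_meas : ∀ m, Measurable fun ω => X ω m) (hC_meas : Measurable C) (hL_meas : Measurable L)
    (hX_int : ∀ m, Integrable fun ω => X ω m) {u : ℕ → Fin M → ℝ} (hu : Monotone u) (hu0 : 0 ≤ u 0)
    {χ : Fin M → ℝ} (hlim : Tendsto u atTop (𝓝 χ)) :
    Tendsto (salesMap r h X C L ∘ u) atTop (𝓝 (salesMap r h X C L χ)) := by
  have hu_nonneg (k : ℕ) : 0 ≤ u k := hu0.trans (hu k.zero_le)
  have hu_le (k : ℕ) : u k ≤ χ := hu.ge_of_tendsto hlim k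
  have hχ : 0 ≤ χ := hu0.trans (hu_le 0)
  refine tendsto_pi_nhds.2 fun m => tendsto_integral_of_dominated_convergence (fun ω => X ω m)
    (fun k => (integrable_mul_comp_relLoss hr_mono hr_mem hX hL hX_meas hC_meas hL_meas hX_int
      (hh_nonneg _ (hu_nonneg k)) m).aestronglyMeasurable) (hX_int m)
    (fun k => ae_of_all _ fun ω => ?_) (ae_of_all _ fun ω => ?_)
  · obtain ⟨h0, h1⟩ := mul_comp_relLoss_mem_Icc hr_mem hX hL (hh_nonneg _ (hu_nonneg k)) ω m
    rwa [Real.norm_of_nonneg h0]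
  · have hloss : Tendsto (fun k => relLoss h X C L (u k) ω) atTop
        (𝓝[Icc 0 (relLoss h X C L χ ω)] relLoss h X C L χ ω) :=
      tendsto_nhdsWithin_iff.2 ⟨(continuousOn_relLoss hh_cont ω χ hχ).tendsto.comp
        (tendsto_nhdsWithin_iff.2 ⟨hlim, Eventually.of_forall hu_nonneg⟩),
        Eventually.of_forall fun k => ⟨relLoss_nonneg hX hL (hh_nonneg _ (hu_nonneg k)) ω,
          relLoss_mono hX (hh_mono (hu_nonneg k) hχ (hu_le k)) ω⟩⟩
    exact tendsto_const_nhds.mul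
      ((hr_cont _ (relLoss_nonneg hX hL (hh_nonneg χ hχ) ω)).tendsto.comp hloss)

end SalesMap

theorem stmt_12_general {Ω : Type*} [MeasureSpace Ω] {M : ℕ}
    (ρ : ℝ → ℝ) (hρ_mono : MonotoneOn ρ (Set.Ici 0))
    (hρ_mem : ∀ u ∈ Set.Ici (0:ℝ), ρ u ∈ Set.Icc (0:ℝ) 1)
    (ρc : ℝ → ℝ)
    (hρc : ∀ u : ℝ, 0 ≤ u → Tendsto (fun ε => ρ ((1 - ε) * u)) (𝓝[>] 0) (𝓝 (ρc u)))
    (h : (Fin M → ℝ) → Fin M → ℝ)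
    (hh_cont : ∀ m, ContinuousOn (fun χ => h χ m) {χ : Fin M → ℝ | ∀ m', 0 ≤ χ m'})
    (hh_mono : ∀ m (χ χ' : Fin M → ℝ), (∀ m', 0 ≤ χ m') → (∀ m', χ m' ≤ χ' m') → h χ m ≤ h χ' m)
    (hh_mem : ∀ m (χ : Fin M → ℝ), (∀ m', 0 ≤ χ m') → h χ m ∈ Set.Icc (0:ℝ) 1)
    (X : Ω → Fin M → ℝ) (C : Ω → ℝ≥0∞) (L : Ω → ℝ)
    (hX_nonneg : ∀ ω m, 0 ≤ X ω m)
    (hL_nonneg : ∀ ω, 0 ≤ L ω)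
    (hX_meas : ∀ m, Measurable fun ω => X ω m)
    (hC_meas : Measurable C) (hL_meas : Measurable L)
    (hX_int : ∀ m, Integrable fun ω => X ω m)
    :
    (∃ χhat : Fin M → ℝ, (∀ m, 0 ≤ χhat m) ∧ (∀ m, fFS ρc h X C L m χhat = 0) ∧
      (∀ χbar : Fin M → ℝ, (∀ m, 0 ≤ χbar m) → (∀ m, fFS ρc h X C L m χbar = 0) →
        ∀ m, χhat m ≤ χbar m) ∧
      χhat ∈ P0FS ρc h X C L) ∧
    chiStarFS ρ h X C L ∈ P0FS ρ h X C L ∧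
    (∀ m, fFS ρ h X C L m (chiStarFS ρ h X C L) = 0) := by
  have hh_mono' : MonotoneOn h (Ici 0) := fun χ hχ χ' _ hle m => hh_mono m χ χ' hχ hle
  have hh_nonneg (χ : Fin M → ℝ) (hχ : 0 ≤ χ) : 0 ≤ h χ := fun m => (hh_mem m χ hχ).1
  have hρc_mono := IsLeftContinuousModification.monotoneOn hρc hρ_mono
  have hρc_mem := IsLeftContinuousModification.mapsTo hρc isClosed_Icc hρ_mem
  have hΦ_mono {r : ℝ → ℝ} (hr_mono : MonotoneOn r (Ici 0)) (hr_mem : MapsTo r (Ici 0) (Icc 0 1)) :=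
    monotoneOn_salesMap (C := C) hr_mono hr_mem hh_mono' hh_nonneg hX_nonneg hL_nonneg hX_meas
      hC_meas hL_meas hX_int
  have hΦ_bdd {r : ℝ → ℝ} (hr_mono : MonotoneOn r (Ici 0)) (hr_mem : MapsTo r (Ici 0) (Icc 0 1)) :=
    bddAbove_image_salesMap (C := C) hr_mono hr_mem hh_nonneg hX_nonneg hL_nonneg hX_meas hC_meas
      hL_meas hX_int
  have hΦ_zero {r : ℝ → ℝ} (hr_mem : MapsTo r (Ici 0) (Icc 0 1)) :=
    salesMap_nonneg (C := C) hr_mem hX_nonneg hL_nonneg (hh_nonneg 0 le_rfl)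
  obtain ⟨χhat, hχhat0, hfix, hleast, hχhat⟩ := exists_least_fixedPt_mem_connectedComponentIn
    (hΦ_mono hρc_mono hρc_mem) (hΦ_zero hρc_mem) (hΦ_bdd hρc_mono hρc_mem)
    fun u hu hu0 χ hlim => tendsto_salesMap_of_monotone hρc_mono hρc_mem
      (fun _ hv => IsLeftContinuousModification.continuousWithinAt_Icc hρc hρ_mono hv) hh_mono'
      hh_nonneg (continuousOn_pi.2 hh_cont) hX_nonneg hL_nonneg hX_meas hC_meas hL_meas hX_int
      hu hu0 hlim
  obtain ⟨hχstar, hχstar_fix⟩ := csSup_connectedComponentIn_mem_and_isFixedPt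
    (hΦ_mono hρ_mono hρ_mem) (hΦ_zero hρ_mem) (hΦ_bdd hρ_mono hρ_mem)
  simp only [forall_fFS_eq_zero_iff, chiStarFS_eq_sSup, P0FS_eq_connectedComponentIn]
  exact ⟨⟨χhat, hχhat0, hfix, fun χ hχ0 hχ => hleast χ hχ0 hχ.le, hχhat⟩, hχstar, hχstar_fix⟩

/-- There is a smallest joint root `χ̂ ∈ P̊₀` of the lower semicontinuous modifications `f̊^m`;
moreover `χ* ∈ P₀` and `χ*` is a joint root of the `f^m`. -/
theorem stmt_12 {Ω : Type*} [MeasureSpace Ω] [IsProbabilityMeasure (volume : Measure Ω)] {M : ℕ}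
    (ρ : ℝ → ℝ) (hρ_mono : MonotoneOn ρ (Set.Ici 0))
    (hρ_rc : ∀ u ∈ Set.Ici (0:ℝ), ContinuousWithinAt ρ (Set.Ici u) u)
    (hρ_zero : ρ 0 = 0) (hρ_mem : ∀ u ∈ Set.Ici (0:ℝ), ρ u ∈ Set.Icc (0:ℝ) 1)
    (hρ_plateau : ∀ u : ℝ, 1 ≤ u → ρ u = ρ 1)
    (ρc : ℝ → ℝ)
    (hρc : ∀ u : ℝ, 0 ≤ u → Tendsto (fun ε => ρ ((1 - ε) * u)) (𝓝[>] 0) (𝓝 (ρc u)))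
    (h : (Fin M → ℝ) → Fin M → ℝ)
    (hh_cont : ∀ m, ContinuousOn (fun χ => h χ m) {χ : Fin M → ℝ | ∀ m', 0 ≤ χ m'})
    (hh_mono : ∀ m (χ χ' : Fin M → ℝ), (∀ m', 0 ≤ χ m') → (∀ m', χ m' ≤ χ' m') → h χ m ≤ h χ' m)
    (hh_mem : ∀ m (χ : Fin M → ℝ), (∀ m', 0 ≤ χ m') → h χ m ∈ Set.Icc (0:ℝ) 1)
    (X : Ω → Fin M → ℝ) (S : Ω → ℝ) (C : Ω → ℝ≥0∞) (L : Ω → ℝ)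
    (hX_nonneg : ∀ ω m, 0 ≤ X ω m) (hS_nonneg : ∀ ω, 0 ≤ S ω) (hC_pos : ∀ ω, 0 < C ω)
    (hL_nonneg : ∀ ω, 0 ≤ L ω)
    (hX_meas : ∀ m, Measurable fun ω => X ω m) (hS_meas : Measurable S)
    (hC_meas : Measurable C) (hL_meas : Measurable L)
    (hX_int : ∀ m, Integrable fun ω => X ω m) (hS_int : Integrable S)
    :
    (∃ χhat : Fin M → ℝ, (∀ m, 0 ≤ χhat m) ∧ (∀ m, fFS ρc h X C L m χhat = 0) ∧
      (∀ χbar : Fin M → ℝ, (∀ m, 0 ≤ χbar m) → (∀ m, fFS ρc h X C L m χbar = 0) →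
        ∀ m, χhat m ≤ χbar m) ∧
      χhat ∈ P0FS ρc h X C L) ∧
    chiStarFS ρ h X C L ∈ P0FS ρ h X C L ∧
    (∀ m, fFS ρ h X C L m (chiStarFS ρ h X C L) = 0) :=
  stmt_12_general ρ hρ_mono hρ_mem ρc hρc h hh_cont hh_mono hh_mem X C L hX_nonneg hL_nonneg hX_meas
    hC_meas hL_meas hX_int
end
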